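/- arXiv:1611.02221 — 6 statements merged into one kernel-verified Lean document; each statement's English description precedes it below -/
import Mathlib

section
/- Let x ∈ M be fixed and let x* be the point of the sample X_1,…,X_{n+m} nearest to x in the metric ρ (ties broken by index). Then E[(f(x*) − f(x))²] ≤ (2L²/(1 − e^{−Q})²)·n^{−2/(2+d)} + e^{−Q·R^d·(n+m)}·f_D², where the expectation is over the draw of the n+m sample points. -/
set_option maxHeartbeats 1000000


open MeasureTheory

/-- Let `x ∈ M` be fixed and let `x*` be the point of the i.i.d. sample
`X_1,…,X_{n+m}` nearest to `x` in the metric (ties broken by index).  Then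
`E[(f(x*) − f(x))²] ≤ (2L²/(1 − e^{−Q})²)·n^{−2/(2+d)} + e^{−Q·R^d·(n+m)}·f_D²`,
where `f_D = sup f − inf f`, `f` is a bounded `L`-Lipschitz function, and
`μ(B_z(r)) ≥ Q·r^d` for all `z` and `0 < r ≤ R`. -/
theorem stmt_1 {M : Type*} [MetricSpace M] [MeasurableSpace M] [BorelSpace M]
    (μ : Measure M) [IsProbabilityMeasure μ]
    (hMbdd : Bornology.IsBounded (Set.univ : Set M))
    (d : ℕ) (hd : 1 ≤ d) (Q R : ℝ) (hQ : 0 < Q) (hR : 0 < R)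
    (hμ : ∀ (z : M) (r : ℝ), 0 < r → r ≤ R →
      ENNReal.ofReal (Q * r ^ d) ≤ μ (Metric.ball z r))
    (f : M → ℝ) (L : ℝ) (hLip : ∀ u v : M, |f u - f v| ≤ L * dist u v)
    (hfbdd : ∃ C : ℝ, ∀ z : M, |f z| ≤ C)
    (n m : ℕ) (hn : 1 ≤ n)
    (x : M) (star : (Fin (n + m) → M) → Fin (n + m))
    (hstar_min : ∀ xs : Fin (n + m) → M, ∀ j : Fin (n + m),
      dist x (xs (star xs)) ≤ dist x (xs j))
    (hstar_tie : ∀ xs : Fin (n + m) → M, ∀ j : Fin (n + m),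
      dist x (xs j) ≤ dist x (xs (star xs)) → star xs ≤ j) :
    ∫ xs : Fin (n + m) → M, (f (xs (star xs)) - f x) ^ 2
        ∂(Measure.pi fun _ : Fin (n + m) => μ)
      ≤ (2 * L ^ 2 / (1 - Real.exp (-Q)) ^ 2) * (n : ℝ) ^ (-(2:ℝ) / (2 + (d : ℝ)))
        + Real.exp (-Q * R ^ d * ((n : ℝ) + (m : ℝ)))
          * (sSup (Set.range f) - sInf (Set.range f)) ^ 2 := by
  classical
  set ν : Measure (Fin (n + m) → M) := Measure.pi (fun _ : Fin (n + m) => μ) with hνdef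
  haveI hprob : IsProbabilityMeasure ν := by rw [hνdef]; infer_instance
  set D : (Fin (n + m) → M) → ℝ := fun xs => dist x (xs (star xs)) with hDdef
  -- continuity of f
  have hfc : Continuous f := by
    have : LipschitzWith (Real.toNNReal L) f := by
      apply LipschitzWith.of_dist_le_mul
      intro u v
      rw [Real.dist_eq]
      calc |f u - f v| ≤ L * dist u v := hLip u v
        _ ≤ Real.toNNReal L * dist u v := by
            apply mul_le_mul_of_nonneg_right _ dist_nonneg
            exact Real.le_coe_toNNReal L
    exact this.continuous
  have hdist : ∀ j : Fin (n + m), Measurable (fun xs : Fin (n + m) → M => dist x (xs j)) :=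
    fun j => ((continuous_const.dist continuous_id).measurable).comp (measurable_pi_apply j)
  -- characterization and measurability of star
  have hstar_char : ∀ (xs : Fin (n + m) → M) (i : Fin (n + m)),
      star xs = i ↔ ((∀ j, dist x (xs i) ≤ dist x (xs j)) ∧
        ∀ j, dist x (xs j) ≤ dist x (xs i) → i ≤ j) := by
    intro xs i
    constructor
    · rintro rfl; exact ⟨hstar_min xs, hstar_tie xs⟩
    · rintro ⟨h1, h2⟩
      have e1 : dist x (xs (star xs)) = dist x (xs i) :=
        le_antisymm (hstar_min xs i) (h1 (star xs))
      exact le_antisymm (hstar_tie xs i e1.ge) (h2 (star xs) e1.le)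
  have hSmeas : ∀ i : Fin (n + m), MeasurableSet {xs : Fin (n + m) → M | star xs = i} := by
    intro i
    have hset : {xs : Fin (n + m) → M | star xs = i} =
        (⋂ j, {xs : Fin (n + m) → M | dist x (xs i) ≤ dist x (xs j)}) ∩
        (⋂ j, {xs : Fin (n + m) → M | dist x (xs j) ≤ dist x (xs i) → i ≤ j}) := by
      ext xs
      simp only [Set.mem_setOf_eq, Set.mem_inter_iff, Set.mem_iInter]
      exact hstar_char xs i
    rw [hset]
    apply MeasurableSet.inter
    · exact MeasurableSet.iInter fun j => measurableSet_le (hdist i) (hdist j)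
    · apply MeasurableSet.iInter
      intro j
      by_cases h : i ≤ j
      · have : {xs : Fin (n + m) → M | dist x (xs j) ≤ dist x (xs i) → i ≤ j} = Set.univ := by
          ext xs; simp [h]
        rw [this]; exact MeasurableSet.univ
      · have : {xs : Fin (n + m) → M | dist x (xs j) ≤ dist x (xs i) → i ≤ j} =
            {xs : Fin (n + m) → M | dist x (xs i) < dist x (xs j)} := by
          ext xs
          simp only [Set.mem_setOf_eq]
          constructor
          · intro hx
            by_contra hlt
            exact h (hx (not_lt.mp hlt))
          · intro hx hle
            exact absurd (lt_of_lt_of_le hx hle) (lt_irrefl _)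
        rw [this]; exact measurableSet_lt (hdist i) (hdist j)
  have hFmeas : Measurable (fun xs : Fin (n + m) → M => f (xs (star xs))) := by
    have heq : (fun xs : Fin (n + m) → M => f (xs (star xs))) =
        fun xs => ∑ i : Fin (n + m), if star xs = i then f (xs i) else 0 := by
      funext xs
      rw [Finset.sum_ite_eq]
      simp
    rw [heq]
    apply Finset.measurable_sum
    intro i _
    exact Measurable.ite (hSmeas i) ((hfc.measurable).comp (measurable_pi_apply i))
      measurable_const
  have hDmeas : Measurable D := by
    have heq : D = fun xs => ∑ i : Fin (n + m), if star xs = i then dist x (xs i) else 0 := by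
      funext xs
      rw [Finset.sum_ite_eq]
      simp [hDdef]
    rw [heq]
    apply Finset.measurable_sum
    intro i _
    exact Measurable.ite (hSmeas i) (hdist i) measurable_const
  have hD_le : ∀ (xs : Fin (n + m) → M) (j : Fin (n + m)), D xs ≤ dist x (xs j) :=
    fun xs j => hstar_min xs j
  -- tail bound
  have tail : ∀ t : ℝ, 0 < t → t ≤ R →
      (ν {xs : Fin (n + m) → M | t ≤ D xs}).toReal
        ≤ Real.exp (-(Q * t ^ d) * ((n : ℝ) + (m : ℝ))) := by
    intro t ht htR
    have hset : {xs : Fin (n + m) → M | t ≤ D xs} =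
        Set.pi Set.univ (fun _ : Fin (n + m) => (Metric.ball x t)ᶜ) := by
      ext xs
      simp only [Set.mem_setOf_eq, Set.mem_pi, Set.mem_univ, forall_true_left,
        Set.mem_compl_iff, Metric.mem_ball]
      constructor
      · intro h j
        have h1 : t ≤ dist x (xs j) := le_trans h (hD_le xs j)
        rw [dist_comm]
        exact not_lt.mpr h1
      · intro h
        have h1 := h (star xs)
        rw [dist_comm] at h1
        exact not_lt.mp h1
    rw [hset, hνdef, Measure.pi_pi]
    have hball : MeasurableSet (Metric.ball x t) := measurableSet_ball
    have hcompl : μ ((Metric.ball x t)ᶜ) = 1 - μ (Metric.ball x t) := by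
      rw [measure_compl hball (measure_ne_top μ _), measure_univ]
    set b := (μ (Metric.ball x t)).toReal with hb
    have hble : μ (Metric.ball x t) ≤ 1 := prob_le_one
    have hb1 : b ≤ 1 := by
      rw [hb, ← ENNReal.toReal_one]
      exact ENNReal.toReal_mono ENNReal.one_ne_top hble
    have hbQ : Q * t ^ d ≤ b := by
      have h := hμ x t ht htR
      exact (ENNReal.ofReal_le_iff_le_toReal (measure_ne_top μ _)).mp h
    have hprod : (∏ _j : Fin (n + m), μ ((Metric.ball x t)ᶜ)).toReal = (1 - b) ^ (n + m) := by
      rw [Finset.prod_const, Finset.card_univ, Fintype.card_fin, ENNReal.toReal_pow,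
        hcompl, ENNReal.toReal_sub_of_le hble ENNReal.one_ne_top, ENNReal.toReal_one]
    rw [hprod]
    have h1b : 0 ≤ 1 - b := by linarith
    have hstep : 1 - b ≤ Real.exp (-(Q * t ^ d)) := by
      have h1 : 1 - b ≤ Real.exp (-b) := by
        have := Real.add_one_le_exp (-b)
        linarith
      exact h1.trans (Real.exp_le_exp.mpr (by linarith))
    calc (1 - b) ^ (n + m) ≤ (Real.exp (-(Q * t ^ d))) ^ (n + m) :=
          pow_le_pow_left₀ h1b hstep _
      _ = Real.exp (-(Q * t ^ d) * ((n : ℝ) + (m : ℝ))) := by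
          rw [← Real.exp_nat_mul]
          congr 1
          push_cast
          ring
  -- bounds from f
  set fD := sSup (Set.range f) - sInf (Set.range f) with hfDdef
  obtain ⟨C, hC⟩ := hfbdd
  have hbddA : BddAbove (Set.range f) := ⟨C, by rintro _ ⟨z, rfl⟩; exact (abs_le.mp (hC z)).2⟩
  have hbddB : BddBelow (Set.range f) := ⟨-C, by rintro _ ⟨z, rfl⟩; exact (abs_le.mp (hC z)).1⟩
  have hfDsq : ∀ u v : M, (f u - f v) ^ 2 ≤ fD ^ 2 := by
    intro u v
    have h1 : f u ≤ sSup (Set.range f) := le_csSup hbddA ⟨u, rfl⟩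
    have h2 : sInf (Set.range f) ≤ f v := csInf_le hbddB ⟨v, rfl⟩
    have h3 : f v ≤ sSup (Set.range f) := le_csSup hbddA ⟨v, rfl⟩
    have h4 : sInf (Set.range f) ≤ f u := csInf_le hbddB ⟨u, rfl⟩
    exact sq_le_sq' (by rw [hfDdef]; linarith) (by rw [hfDdef]; linarith)
  -- epsilon
  set ε := (n : ℝ) ^ (-(1 : ℝ) / (2 + (d : ℝ))) with hεdef
  have hn1 : (1 : ℝ) ≤ (n : ℝ) := by exact_mod_cast hn
  have hnpos : (0 : ℝ) < (n : ℝ) := by linarith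
  have h2d : (0 : ℝ) < 2 + (d : ℝ) := by positivity
  have hεpos : 0 < ε := Real.rpow_pos_of_pos hnpos _
  have hεsq : ε ^ 2 = (n : ℝ) ^ (-(2 : ℝ) / (2 + (d : ℝ))) := by
    rw [hεdef, ← Real.rpow_natCast ((n : ℝ) ^ (-(1 : ℝ) / (2 + (d : ℝ)))) 2,
      ← Real.rpow_mul hnpos.le]
    congr 1
    push_cast
    ring
  have hεd : ε ^ d = (n : ℝ) ^ (-(d : ℝ) / (2 + (d : ℝ))) := by
    rw [hεdef, ← Real.rpow_natCast ((n : ℝ) ^ (-(1 : ℝ) / (2 + (d : ℝ)))) d,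
      ← Real.rpow_mul hnpos.le]
    congr 1
    ring
  have hεdn : (1 : ℝ) ≤ (n : ℝ) * ε ^ d := by
    have h1 : (n : ℝ) * ε ^ d = (n : ℝ) ^ ((1 : ℝ) + -(d : ℝ) / (2 + (d : ℝ))) := by
      rw [hεd, Real.rpow_add hnpos, Real.rpow_one]
    rw [h1]
    calc (1 : ℝ) = (n : ℝ) ^ (0 : ℝ) := (Real.rpow_zero _).symm
      _ ≤ (n : ℝ) ^ ((1 : ℝ) + -(d : ℝ) / (2 + (d : ℝ))) := by
          apply Real.rpow_le_rpow_of_exponent_le hn1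
          rw [neg_div, ← sub_eq_add_neg, sub_nonneg, div_le_one h2d]
          linarith
  set K := Nat.ceil (R / ε) with hKdef
  -- the events
  set A : ℕ → Set (Fin (n + m) → M) :=
    fun k => {xs | (k : ℝ) * ε ≤ D xs ∧ (k : ℝ) * ε ≤ R} with hAdef
  have hAmeas : ∀ k : ℕ, MeasurableSet (A k) := by
    intro k
    have h0 : A k = {xs : Fin (n + m) → M | (k : ℝ) * ε ≤ D xs} ∩
        {xs : Fin (n + m) → M | (k : ℝ) * ε ≤ R} := rfl
    rw [h0]
    apply MeasurableSet.inter
    · exact measurableSet_le measurable_const hDmeas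
    · by_cases h : (k : ℝ) * ε ≤ R
      · have : {xs : Fin (n + m) → M | (k : ℝ) * ε ≤ R} = Set.univ := by ext xs; simp [h]
        rw [this]; exact MeasurableSet.univ
      · have : {xs : Fin (n + m) → M | (k : ℝ) * ε ≤ R} = ∅ := by ext xs; simp [h]
        rw [this]; exact MeasurableSet.empty
  set W : Set (Fin (n + m) → M) := {xs | R < D xs} with hWdef
  have hWmeas : MeasurableSet W := measurableSet_lt measurable_const hDmeas
  -- bounding function
  set B : (Fin (n + m) → M) → ℝ := fun xs =>
    L ^ 2 * ε ^ 2 +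
      (∑ k ∈ Finset.Icc 1 K,
        (A k).indicator (fun _ => L ^ 2 * ((2 * (k : ℝ) + 1) * ε ^ 2)) xs) +
      W.indicator (fun _ => fD ^ 2) xs with hBdef
  have hck_nonneg : ∀ k : ℕ, 0 ≤ L ^ 2 * ((2 * (k : ℝ) + 1) * ε ^ 2) := by
    intro k
    have : (0:ℝ) ≤ (k:ℝ) := Nat.cast_nonneg k
    positivity
  -- pointwise bound
  have hpt : ∀ xs : Fin (n + m) → M, (f (xs (star xs)) - f x) ^ 2 ≤ B xs := by
    intro xs
    have hD0 : 0 ≤ D xs := dist_nonneg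
    by_cases hDR : D xs ≤ R
    · -- Lipschitz case
      have hg : (f (xs (star xs)) - f x) ^ 2 ≤ L ^ 2 * D xs ^ 2 := by
        have h1 : |f (xs (star xs)) - f x| ≤ L * D xs := by
          have := hLip (xs (star xs)) x
          rw [dist_comm] at this
          exact this
        have h2 := abs_le.mp h1
        calc (f (xs (star xs)) - f x) ^ 2 ≤ (L * D xs) ^ 2 :=
              sq_le_sq' (by linarith [h2.1]) h2.2
          _ = L ^ 2 * D xs ^ 2 := by ring
      set k0 := Nat.floor (D xs / ε) with hk0def
      have hk0K : k0 ≤ K := by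
        calc k0 ≤ Nat.floor (R / ε) :=
              Nat.floor_mono ((div_le_div_iff_of_pos_right hεpos).mpr hDR)
          _ ≤ K := Nat.floor_le_ceil _
      have hmem : ∀ k ∈ Finset.Icc 1 k0, xs ∈ A k := by
        intro k hk
        obtain ⟨hk1, hk2⟩ := Finset.mem_Icc.mp hk
        have hkD : (k : ℝ) * ε ≤ D xs := by
          have hkk0 : (k : ℝ) ≤ (k0 : ℝ) := by exact_mod_cast hk2
          have hfl : (k0 : ℝ) ≤ D xs / ε := Nat.floor_le (by positivity)
          rw [← le_div_iff₀ hεpos]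
          exact hkk0.trans hfl
        exact ⟨hkD, hkD.trans hDR⟩
      have hsum_tel : ∀ j : ℕ,
          ε ^ 2 + ∑ k ∈ Finset.Icc 1 j, (2 * (k : ℝ) + 1) * ε ^ 2
            = ((j : ℝ) + 1) ^ 2 * ε ^ 2 := by
        intro j
        induction j with
        | zero => simp
        | succ p ih =>
            rw [Finset.sum_Icc_succ_top (by omega : 1 ≤ p + 1)]
            push_cast
            push_cast at ih
            nlinarith [ih]
      have hDsq : D xs ^ 2 ≤ ((k0 : ℝ) + 1) ^ 2 * ε ^ 2 := by
        have hlt : D xs / ε < (k0 : ℝ) + 1 := Nat.lt_floor_add_one _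
        rw [div_lt_iff₀ hεpos] at hlt
        calc D xs ^ 2 ≤ (((k0 : ℝ) + 1) * ε) ^ 2 := by nlinarith
          _ = ((k0 : ℝ) + 1) ^ 2 * ε ^ 2 := by ring
      have hsum_ge : ∑ k ∈ Finset.Icc 1 k0, (2 * (k : ℝ) + 1) * ε ^ 2
          ≤ ∑ k ∈ Finset.Icc 1 K,
              (A k).indicator (fun _ => (2 * (k : ℝ) + 1) * ε ^ 2) xs := by
        calc ∑ k ∈ Finset.Icc 1 k0, (2 * (k : ℝ) + 1) * ε ^ 2
            = ∑ k ∈ Finset.Icc 1 k0,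
                (A k).indicator (fun _ => (2 * (k : ℝ) + 1) * ε ^ 2) xs := by
              apply Finset.sum_congr rfl
              intro k hk
              rw [Set.indicator_of_mem (hmem k hk)]
          _ ≤ _ := by
              apply Finset.sum_le_sum_of_subset_of_nonneg
                (Finset.Icc_subset_Icc_right hk0K)
              intro k _ _
              apply Set.indicator_nonneg
              intro _ _
              have : (0:ℝ) ≤ (k:ℝ) := Nat.cast_nonneg k
              positivity
      have hkey : D xs ^ 2 ≤ ε ^ 2 + ∑ k ∈ Finset.Icc 1 K,
          (A k).indicator (fun _ => (2 * (k : ℝ) + 1) * ε ^ 2) xs := by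
        calc D xs ^ 2 ≤ ((k0 : ℝ) + 1) ^ 2 * ε ^ 2 := hDsq
          _ = ε ^ 2 + ∑ k ∈ Finset.Icc 1 k0, (2 * (k : ℝ) + 1) * ε ^ 2 :=
              (hsum_tel k0).symm
          _ ≤ _ := by linarith [hsum_ge]
      have hWzero : 0 ≤ W.indicator (fun _ => fD ^ 2) xs :=
        Set.indicator_nonneg (fun _ _ => sq_nonneg fD) xs
      have hdistrib : ∑ k ∈ Finset.Icc 1 K,
          (A k).indicator (fun _ => L ^ 2 * ((2 * (k : ℝ) + 1) * ε ^ 2)) xs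
          = L ^ 2 * ∑ k ∈ Finset.Icc 1 K,
              (A k).indicator (fun _ => (2 * (k : ℝ) + 1) * ε ^ 2) xs := by
        rw [Finset.mul_sum]
        apply Finset.sum_congr rfl
        intro k _
        by_cases hxk : xs ∈ A k
        · rw [Set.indicator_of_mem hxk, Set.indicator_of_mem hxk]
        · rw [Set.indicator_of_notMem hxk, Set.indicator_of_notMem hxk, mul_zero]
      show (f (xs (star xs)) - f x) ^ 2 ≤
          L ^ 2 * ε ^ 2 + (∑ k ∈ Finset.Icc 1 K,
            (A k).indicator (fun _ => L ^ 2 * ((2 * (k : ℝ) + 1) * ε ^ 2)) xs) +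
          W.indicator (fun _ => fD ^ 2) xs
      rw [hdistrib]
      have hmul := mul_le_mul_of_nonneg_left hkey (sq_nonneg L)
      calc (f (xs (star xs)) - f x) ^ 2 ≤ L ^ 2 * D xs ^ 2 := hg
        _ ≤ L ^ 2 * (ε ^ 2 + ∑ k ∈ Finset.Icc 1 K,
              (A k).indicator (fun _ => (2 * (k : ℝ) + 1) * ε ^ 2) xs) := hmul
        _ ≤ _ := by rw [mul_add]; linarith [hWzero]
    · -- far case
      have hxW : xs ∈ W := not_le.mp hDR
      have h1 : W.indicator (fun _ => fD ^ 2) xs = fD ^ 2 := Set.indicator_of_mem hxW _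
      have h2 : 0 ≤ ∑ k ∈ Finset.Icc 1 K,
          (A k).indicator (fun _ => L ^ 2 * ((2 * (k : ℝ) + 1) * ε ^ 2)) xs := by
        apply Finset.sum_nonneg
        intro k _
        exact Set.indicator_nonneg (fun _ _ => hck_nonneg k) xs
      have h3 : (0:ℝ) ≤ L ^ 2 * ε ^ 2 := by positivity
      show (f (xs (star xs)) - f x) ^ 2 ≤
          L ^ 2 * ε ^ 2 + (∑ k ∈ Finset.Icc 1 K,
            (A k).indicator (fun _ => L ^ 2 * ((2 * (k : ℝ) + 1) * ε ^ 2)) xs) +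
          W.indicator (fun _ => fD ^ 2) xs
      rw [h1]
      have := hfDsq (xs (star xs)) x
      linarith
  -- integrability
  have hgmeas : Measurable (fun xs : Fin (n + m) → M => (f (xs (star xs)) - f x) ^ 2) :=
    (hFmeas.sub measurable_const).pow_const 2
  have hg_int : Integrable (fun xs : Fin (n + m) → M => (f (xs (star xs)) - f x) ^ 2) ν := by
    apply Integrable.mono' (integrable_const (fD ^ 2)) hgmeas.aestronglyMeasurable
    filter_upwards with xs
    rw [Real.norm_eq_abs, abs_of_nonneg (sq_nonneg _)]
    exact hfDsq _ _
  have hInt1 : Integrable (fun xs => ∑ k ∈ Finset.Icc 1 K,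
      (A k).indicator (fun _ => L ^ 2 * ((2 * (k : ℝ) + 1) * ε ^ 2)) xs) ν := by
    apply integrable_finset_sum
    intro k _
    exact (integrable_const _).indicator (hAmeas k)
  have hB_int : Integrable B ν := by
    rw [hBdef]
    exact ((integrable_const _).add hInt1).add ((integrable_const _).indicator hWmeas)
  -- integral of B
  have hBint_eq : ∫ xs, B xs ∂ν
      = L ^ 2 * ε ^ 2 +
        (∑ k ∈ Finset.Icc 1 K,
          (ν (A k)).toReal * (L ^ 2 * ((2 * (k : ℝ) + 1) * ε ^ 2))) +
        (ν W).toReal * fD ^ 2 := by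
    have hI12 : Integrable (fun xs => L ^ 2 * ε ^ 2 + ∑ k ∈ Finset.Icc 1 K,
        (A k).indicator (fun _ => L ^ 2 * ((2 * (k : ℝ) + 1) * ε ^ 2)) xs) ν :=
      (integrable_const _).add hInt1
    have hIW : Integrable (fun xs => W.indicator (fun _ => fD ^ 2) xs) ν :=
      (integrable_const _).indicator hWmeas
    rw [hBdef]
    rw [integral_add hI12 hIW,
      integral_add (integrable_const _) hInt1, integral_const,
      integral_finset_sum _ (fun k _ => (integrable_const _).indicator (hAmeas k)),
      integral_indicator_const _ hWmeas]
    rw [probReal_univ, one_smul, smul_eq_mul]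
    congr 1
    congr 1
    apply Finset.sum_congr rfl
    intro k _
    rw [integral_indicator_const _ (hAmeas k), smul_eq_mul]
    rfl
  -- measure bounds
  have hAk_bound : ∀ k ∈ Finset.Icc 1 K, (ν (A k)).toReal ≤ Real.exp (-Q * (k : ℝ)) := by
    intro k hk
    obtain ⟨hk1, -⟩ := Finset.mem_Icc.mp hk
    have hk1' : (1 : ℝ) ≤ (k : ℝ) := by exact_mod_cast hk1
    by_cases hkR : (k : ℝ) * ε ≤ R
    · have hsub : A k ⊆ {xs : Fin (n + m) → M | (k : ℝ) * ε ≤ D xs} := fun xs h => h.1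
      have hkεpos : 0 < (k : ℝ) * ε := mul_pos (by linarith) hεpos
      have h1 := tail ((k : ℝ) * ε) hkεpos hkR
      have h2 : (ν (A k)).toReal ≤ (ν {xs : Fin (n + m) → M | (k : ℝ) * ε ≤ D xs}).toReal :=
        ENNReal.toReal_mono (measure_ne_top _ _) (measure_mono hsub)
      refine h2.trans (h1.trans ?_)
      rw [Real.exp_le_exp]
      have hkd : (k : ℝ) ≤ (k : ℝ) ^ d := le_self_pow₀ (by linarith) (by omega)
      have e1 : ((k : ℝ) * ε) ^ d = (k : ℝ) ^ d * ε ^ d := mul_pow _ _ _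
      have hkdnn : (0:ℝ) ≤ (k : ℝ) ^ d := by positivity
      have h3 : (k : ℝ) ^ d ≤ (k : ℝ) ^ d * ((n : ℝ) * ε ^ d) := by
        nlinarith
      have hm0 : (0:ℝ) ≤ (m : ℝ) := Nat.cast_nonneg m
      have hεdnn : (0:ℝ) ≤ ε ^ d := by positivity
      have h4 : (k : ℝ) ^ d * ε ^ d * (n : ℝ) ≤ (k : ℝ) ^ d * ε ^ d * ((n : ℝ) + (m : ℝ)) := by
        nlinarith [mul_nonneg hkdnn hεdnn]
      have h5 : (k : ℝ) ≤ (k : ℝ) ^ d * ε ^ d * ((n : ℝ) + (m : ℝ)) := by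
        calc (k : ℝ) ≤ (k : ℝ) ^ d := hkd
          _ ≤ (k : ℝ) ^ d * ((n : ℝ) * ε ^ d) := h3
          _ = (k : ℝ) ^ d * ε ^ d * (n : ℝ) := by ring
          _ ≤ _ := h4
      have h6 := mul_le_mul_of_nonneg_left h5 hQ.le
      rw [e1]
      nlinarith [h6]
    · have hempty : A k = ∅ := by
        apply Set.eq_empty_iff_forall_notMem.mpr
        intro xs hxs
        exact hkR hxs.2
      rw [hempty]
      simp only [measure_empty, ENNReal.toReal_zero]
      exact (Real.exp_pos _).le
  have hW_bound : (ν W).toReal ≤ Real.exp (-Q * R ^ d * ((n : ℝ) + (m : ℝ))) := by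
    have hsub : W ⊆ {xs : Fin (n + m) → M | R ≤ D xs} := by
      intro xs h
      have h' : R < D xs := h
      exact le_of_lt h'
    have h1 := tail R hR le_rfl
    have h2 : (ν W).toReal ≤ (ν {xs : Fin (n + m) → M | R ≤ D xs}).toReal :=
      ENNReal.toReal_mono (measure_ne_top _ _) (measure_mono hsub)
    refine h2.trans (h1.trans ?_)
    apply le_of_eq
    congr 1
    ring
  -- geometric series
  set q := Real.exp (-Q) with hqdef
  have hq0 : 0 < q := Real.exp_pos _
  have hq1 : q < 1 := by
    rw [hqdef, Real.exp_lt_one_iff]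
    linarith
  have hqk : ∀ k : ℕ, Real.exp (-Q * (k : ℝ)) = q ^ k := by
    intro k
    rw [hqdef, ← Real.exp_nat_mul]
    congr 1
    ring
  have hgeo : ∑ k ∈ Finset.range (K + 1), (2 * (k : ℝ) + 2) * q ^ k ≤ 2 / (1 - q) ^ 2 := by
    have hnorm : ‖q‖ < 1 := by rw [Real.norm_eq_abs, abs_of_pos hq0]; exact hq1
    have h1 : HasSum (fun k : ℕ => (2 * (k : ℝ) + 2) * q ^ k) (2 / (1 - q) ^ 2) := by
      have ha := (hasSum_coe_mul_geometric_of_norm_lt_one hnorm).mul_left 2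
      have hb := (hasSum_geometric_of_lt_one hq0.le hq1).mul_left 2
      have hc := ha.add hb
      have he : (fun k : ℕ => 2 * ((k : ℝ) * q ^ k) + 2 * q ^ k)
          = fun k : ℕ => (2 * (k : ℝ) + 2) * q ^ k := by
        funext k; ring
      rw [he] at hc
      have heq2 : 2 * (q / (1 - q) ^ 2) + 2 * (1 - q)⁻¹ = 2 / (1 - q) ^ 2 := by
        have h1q : (1 : ℝ) - q ≠ 0 := by linarith
        field_simp
        ring
      rw [heq2] at hc
      exact hc
    have h2 := h1.summable.sum_le_tsum (Finset.range (K + 1))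
      (fun k _ => mul_nonneg (by positivity) (pow_nonneg hq0.le k))
    rw [h1.tsum_eq] at h2
    exact h2
  -- assembly
  have hfinal1 : ∫ xs, (f (xs (star xs)) - f x) ^ 2 ∂ν ≤ ∫ xs, B xs ∂ν :=
    integral_mono hg_int hB_int (fun xs => hpt xs)
  rw [hBint_eq] at hfinal1
  have hstep1 : ∑ k ∈ Finset.Icc 1 K, (ν (A k)).toReal * (L ^ 2 * ((2 * (k : ℝ) + 1) * ε ^ 2))
      ≤ ∑ k ∈ Finset.Icc 1 K, q ^ k * (L ^ 2 * ((2 * (k : ℝ) + 1) * ε ^ 2)) := by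
    apply Finset.sum_le_sum
    intro k hk
    apply mul_le_mul_of_nonneg_right _ (hck_nonneg k)
    rw [← hqk k]
    exact hAk_bound k hk
  have h0notin : (0 : ℕ) ∉ Finset.Icc 1 K := by simp
  have hterm : ∀ k ∈ Finset.Icc 1 K, q ^ k * (L ^ 2 * ((2 * (k : ℝ) + 1) * ε ^ 2))
      ≤ L ^ 2 * ε ^ 2 * ((2 * (k : ℝ) + 2) * q ^ k) := by
    intro k _
    have hqknn : (0 : ℝ) ≤ q ^ k := pow_nonneg hq0.le k
    have hLε : (0 : ℝ) ≤ L ^ 2 * ε ^ 2 := by positivity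
    nlinarith [mul_nonneg hLε hqknn]
  have hstep2 : L ^ 2 * ε ^ 2 + ∑ k ∈ Finset.Icc 1 K,
      q ^ k * (L ^ 2 * ((2 * (k : ℝ) + 1) * ε ^ 2)) ≤ L ^ 2 * ε ^ 2 * (2 / (1 - q) ^ 2) := by
    have hins : Finset.range (K + 1) = insert 0 (Finset.Icc 1 K) := by
      ext k
      simp only [Finset.mem_range, Finset.mem_insert, Finset.mem_Icc]
      omega
    have hA0 : L ^ 2 * ε ^ 2 ≤ L ^ 2 * ε ^ 2 * ((2 * ((0 : ℕ) : ℝ) + 2) * q ^ (0 : ℕ)) := by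
      have hLε : (0 : ℝ) ≤ L ^ 2 * ε ^ 2 := by positivity
      simp only [Nat.cast_zero, pow_zero]
      nlinarith
    have hsum := Finset.sum_le_sum hterm
    have hre : L ^ 2 * ε ^ 2 * ((2 * ((0 : ℕ) : ℝ) + 2) * q ^ (0 : ℕ)) +
        ∑ k ∈ Finset.Icc 1 K, L ^ 2 * ε ^ 2 * ((2 * (k : ℝ) + 2) * q ^ k)
        = ∑ k ∈ Finset.range (K + 1), L ^ 2 * ε ^ 2 * ((2 * (k : ℝ) + 2) * q ^ k) := by
      rw [hins, Finset.sum_insert h0notin]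
    have hfin : ∑ k ∈ Finset.range (K + 1), L ^ 2 * ε ^ 2 * ((2 * (k : ℝ) + 2) * q ^ k)
        = L ^ 2 * ε ^ 2 * ∑ k ∈ Finset.range (K + 1), (2 * (k : ℝ) + 2) * q ^ k := by
      rw [Finset.mul_sum]
    have hle2 : L ^ 2 * ε ^ 2 * ∑ k ∈ Finset.range (K + 1), (2 * (k : ℝ) + 2) * q ^ k
        ≤ L ^ 2 * ε ^ 2 * (2 / (1 - q) ^ 2) :=
      mul_le_mul_of_nonneg_left hgeo (by positivity)
    linarith
  have hstep3 : (ν W).toReal * fD ^ 2 ≤ Real.exp (-Q * R ^ d * ((n : ℝ) + (m : ℝ))) * fD ^ 2 :=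
    mul_le_mul_of_nonneg_right hW_bound (sq_nonneg fD)
  have hrw : L ^ 2 * ε ^ 2 * (2 / (1 - q) ^ 2)
      = 2 * L ^ 2 / (1 - q) ^ 2 * (n : ℝ) ^ (-(2 : ℝ) / (2 + (d : ℝ))) := by
    rw [← hεsq]
    ring
  rw [← hrw]
  calc ∫ xs, (f (xs (star xs)) - f x) ^ 2 ∂ν
      ≤ L ^ 2 * ε ^ 2 + ∑ k ∈ Finset.Icc 1 K,
          (ν (A k)).toReal * (L ^ 2 * ((2 * (k:ℝ) + 1) * ε ^ 2)) + (ν W).toReal * fD ^ 2 :=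
        hfinal1
    _ ≤ L ^ 2 * ε ^ 2 + ∑ k ∈ Finset.Icc 1 K,
          q ^ k * (L ^ 2 * ((2 * (k:ℝ) + 1) * ε ^ 2)) + (ν W).toReal * fD ^ 2 := by
        linarith [hstep1]
    _ ≤ L ^ 2 * ε ^ 2 * (2 / (1 - q) ^ 2) + (ν W).toReal * fD ^ 2 := by
        linarith [hstep2]
    _ ≤ L ^ 2 * ε ^ 2 * (2 / (1 - q) ^ 2)
          + Real.exp (-Q * R ^ d * ((n:ℝ) + (m:ℝ))) * fD ^ 2 := by
        exact add_le_add_right hstep3 _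
end

section
/- Fix x ∈ M, let ℓ ≥ 1, and let X_1,…,X_ℓ be drawn i.i.d. from μ. Then for every λ > 0, ∫_0^{λ²R²} P( min_{1≤i≤ℓ} ρ(x, X_i) > √r / λ ) dr ≤ 2λ²·ℓ^{−2/d} / (1 − e^{−Q})². -/
open MeasureTheory

set_option maxHeartbeats 1000000 in

/-- Fix `x ∈ M`, let `ℓ ≥ 1`, and let `X_1,…,X_ℓ` be i.i.d. from `μ`,
where `μ(B_x(r)) ≥ Q·r^d` for all `0 < r ≤ R`.  Then for every `λ > 0`,
`∫_0^{λ²R²} P(min_i ρ(x, X_i) > √r / λ) dr ≤ 2λ²·ℓ^{−2/d} / (1 − e^{−Q})²`. -/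
theorem stmt_3 {M : Type*} [MetricSpace M] [MeasurableSpace M] [BorelSpace M]
    (μ : Measure M) [IsProbabilityMeasure μ]
    (d : ℕ) (hd : 1 ≤ d) (x : M) (Q R : ℝ) (hQ : 0 < Q) (hR : 0 < R)
    (hμ : ∀ r : ℝ, 0 < r → r ≤ R → ENNReal.ofReal (Q * r ^ d) ≤ μ (Metric.ball x r))
    (ℓ : ℕ) (hℓ : 1 ≤ ℓ) (lam : ℝ) (hlam : 0 < lam) :
    ∫ r in (0:ℝ)..(lam ^ 2 * R ^ 2),
        ((Measure.pi fun _ : Fin ℓ => μ)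
          {xs : Fin ℓ → M | ∀ i : Fin ℓ, Real.sqrt r / lam < dist x (xs i)}).toReal
      ≤ 2 * lam ^ 2 * (ℓ : ℝ) ^ (-(2:ℝ) / (d : ℝ)) / (1 - Real.exp (-Q)) ^ 2 := by
  set ν := Measure.pi fun _ : Fin ℓ => μ with hν
  set f : ℝ → ℝ := fun r =>
    (ν {xs : Fin ℓ → M | ∀ i : Fin ℓ, Real.sqrt r / lam < dist x (xs i)}).toReal with hf
  have hl0 : (0:ℝ) < (ℓ:ℝ) := by exact_mod_cast hℓ
  have hd0 : (d:ℝ) ≠ 0 := by positivity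
  set q : ℝ := Real.exp (-Q) with hqdef
  have hq0 : 0 < q := Real.exp_pos _
  have hq1 : q < 1 := Real.exp_lt_one_iff.mpr (by linarith)
  have h1q : 0 < 1 - q := by linarith
  have hQq : 1 - q ≤ Q := by
    have := Real.add_one_le_exp (-Q); simp only [hqdef]; linarith
  set b : ℝ := lam * (ℓ:ℝ) ^ (-(1:ℝ)/(d:ℝ)) with hbdef
  have hb : 0 < b := by positivity
  set a : ℝ := b ^ 2 with hadef
  have ha : 0 < a := by positivity
  set T : ℝ := lam ^ 2 * R ^ 2 with hTdef
  have hT : 0 < T := by positivity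
  have hνprob : IsProbabilityMeasure ν := by rw [hν]; infer_instance
  clear_value ν f q b a T
  -- RHS rewriting
  have hexp2 : (-(1:ℝ)/(d:ℝ)) * ((2:ℕ):ℝ) = -(2:ℝ)/(d:ℝ) := by push_cast; ring
  have hrhs : 2 * lam ^ 2 * (ℓ:ℝ) ^ (-(2:ℝ)/(d:ℝ)) / (1 - q) ^ 2 = 2 * a / (1 - q) ^ 2 := by
    rw [hadef, hbdef, mul_pow, ← Real.rpow_natCast ((ℓ:ℝ) ^ (-(1:ℝ)/(d:ℝ))) 2,
      ← Real.rpow_mul hl0.le, hexp2]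
    ring
  have hbd : b ^ d = lam ^ d / (ℓ:ℝ) := by
    rw [hbdef, mul_pow, ← Real.rpow_natCast ((ℓ:ℝ) ^ (-(1:ℝ)/(d:ℝ))) d,
      ← Real.rpow_mul hl0.le]
    have : -(1:ℝ)/(d:ℝ) * (d:ℕ) = -1 := by field_simp
    rw [this, Real.rpow_neg_one, div_eq_mul_inv]
  rw [hrhs]
  -- key scalar inequality
  have hkey : q ^ 2 + 2 * q * Q ≤ 1 := by
    rw [hqdef]
    have hs : Q < Real.sinh Q := Real.self_lt_sinh_iff.mpr hQ
    rw [Real.sinh_eq] at hs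
    have hmul : Real.exp Q * Real.exp (-Q) = 1 := by
      rw [← Real.exp_add]; simp
    nlinarith [Real.exp_pos Q, Real.exp_pos (-Q)]
  -- basic properties of f
  have hf_nonneg : ∀ r, 0 ≤ f r := by
    intro r; simp only [hf]; exact ENNReal.toReal_nonneg
  have hf_le_one : ∀ r, f r ≤ 1 := by
    intro r
    have : ν {xs : Fin ℓ → M | ∀ i : Fin ℓ, Real.sqrt r / lam < dist x (xs i)} ≤ 1 :=
      prob_le_one
    simpa [hf] using ENNReal.toReal_le_of_le_ofReal zero_le_one (by simpa using this)
  have hf_anti : Antitone f := by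
    intro r r' hrr'
    simp only [hf]
    apply ENNReal.toReal_mono (measure_ne_top _ _)
    apply measure_mono
    intro xs hxs i
    exact lt_of_le_of_lt (by
      apply div_le_div_of_nonneg_right _ hlam.le
      exact Real.sqrt_le_sqrt hrr') (hxs i)
  have hf_int : ∀ u v : ℝ, IntervalIntegrable f MeasureTheory.volume u v := fun u v =>
    (hf_anti.antitoneOn _).intervalIntegrable
  -- pointwise bound on [a, T]
  have hpoint : ∀ r ∈ Set.Icc a T, f r ≤ Real.exp (-(Q / b * Real.sqrt r)) := by
    intro r hr
    obtain ⟨har, hrT⟩ := hr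
    have hr0 : 0 < r := lt_of_lt_of_le ha har
    set s : ℝ := Real.sqrt r with hsdef
    have hs0 : 0 < s := Real.sqrt_pos.mpr hr0
    have hsb : b ≤ s := by
      have := Real.sqrt_le_sqrt har
      rwa [hadef, Real.sqrt_sq hb.le] at this
    set t : ℝ := s / lam with htdef
    have ht0 : 0 < t := by positivity
    have htR : t ≤ R := by
      have h1 : s ≤ lam * R := by
        have := Real.sqrt_le_sqrt hrT
        rwa [hTdef, show lam ^ 2 * R ^ 2 = (lam * R) ^ 2 by ring,
          Real.sqrt_sq (by positivity)] at this
      rw [htdef, div_le_iff₀ hlam]; linarith [h1]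
    have hball := hμ t ht0 htR
    have hQt1 : Q * t ^ d ≤ 1 := by
      have : ENNReal.ofReal (Q * t ^ d) ≤ 1 := hball.trans prob_le_one
      exact_mod_cast ENNReal.ofReal_le_one.mp this
    have hQt0 : 0 ≤ Q * t ^ d := by positivity
    have hA : {y : M | t < dist x y} ⊆ (Metric.ball x t)ᶜ := by
      intro y hy hmem
      rw [Metric.mem_ball, dist_comm] at hmem
      exact absurd hy (not_lt.mpr hmem.le)
    have hμA : μ {y : M | t < dist x y} ≤ ENNReal.ofReal (1 - Q * t ^ d) := by
      refine (measure_mono hA).trans ?_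
      rw [prob_compl_eq_one_sub measurableSet_ball,
        ENNReal.ofReal_sub _ hQt0, ENNReal.ofReal_one]
      exact tsub_le_tsub_left hball 1
    have hset : {xs : Fin ℓ → M | ∀ i : Fin ℓ, Real.sqrt r / lam < dist x (xs i)} =
        Set.pi Set.univ (fun _ : Fin ℓ => {y : M | t < dist x y}) := by
      ext xs; simp [Set.mem_pi, htdef, hsdef]
    have hνS : ν {xs : Fin ℓ → M | ∀ i : Fin ℓ, Real.sqrt r / lam < dist x (xs i)}
        = (μ {y : M | t < dist x y}) ^ ℓ := by
      rw [hset, hν, Measure.pi_pi]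
      simp
    have hfr : f r = (μ {y : M | t < dist x y}).toReal ^ ℓ := by
      rw [hf]; simp only; rw [hνS, ENNReal.toReal_pow]
    set p : ℝ := (μ {y : M | t < dist x y}).toReal with hpdef
    have hp0 : 0 ≤ p := ENNReal.toReal_nonneg
    have hple : p ≤ 1 - Q * t ^ d := by
      have := ENNReal.toReal_mono (by simp) hμA
      rwa [ENNReal.toReal_ofReal (by linarith)] at this
    have h1 : p ^ ℓ ≤ (1 - Q * t ^ d) ^ ℓ := pow_le_pow_left₀ hp0 hple ℓ
    have h2 : (1 - Q * t ^ d) ^ ℓ ≤ Real.exp (-(Q * t ^ d)) ^ ℓ := by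
      apply pow_le_pow_left₀ (by linarith)
      have := Real.add_one_le_exp (-(Q * t ^ d)); linarith
    have h3 : Real.exp (-(Q * t ^ d)) ^ ℓ = Real.exp (-((ℓ:ℝ) * (Q * t ^ d))) := by
      rw [← Real.exp_nat_mul]; ring_nf
    have h4 : Q / b * s ≤ (ℓ:ℝ) * (Q * t ^ d) := by
      have hsb1 : 1 ≤ s / b := (one_le_div hb).mpr hsb
      have h5 : s / b ≤ (s / b) ^ d := le_self_pow₀ hsb1 (by omega)
      have h6 : (s / b) ^ d = (ℓ:ℝ) * t ^ d := by
        rw [div_pow, hbd, htdef, div_pow]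
        field_simp
      calc Q / b * s = Q * (s / b) := by ring
        _ ≤ Q * ((ℓ:ℝ) * t ^ d) := by
            rw [← h6]; exact mul_le_mul_of_nonneg_left h5 hQ.le
        _ = (ℓ:ℝ) * (Q * t ^ d) := by ring
    calc f r = p ^ ℓ := hfr
      _ ≤ Real.exp (-((ℓ:ℝ) * (Q * t ^ d))) := by rw [← h3]; exact h1.trans h2
      _ ≤ Real.exp (-(Q / b * s)) := by
          apply Real.exp_le_exp.mpr; linarith [h4]
  -- bound ∫_0^min by length
  rcases le_or_gt T a with hTa | haT
  · -- easy case
    have h1 : ∫ r in (0:ℝ)..T, f r ≤ ∫ r in (0:ℝ)..T, (1:ℝ) := by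
      apply intervalIntegral.integral_mono_on hT.le (hf_int 0 T)
        intervalIntegrable_const
      intro r _; exact hf_le_one r
    rw [intervalIntegral.integral_const] at h1
    simp only [smul_eq_mul, mul_one, sub_zero] at h1
    have h2 : a ≤ 2 * a / (1 - q) ^ 2 := by
      rw [le_div_iff₀ (by positivity)]
      have h3 : (1 - q) ^ 2 ≤ 1 := by nlinarith
      nlinarith
    calc ∫ r in (0:ℝ)..T, f r ≤ T := h1
      _ ≤ a := hTa
      _ ≤ 2 * a / (1 - q) ^ 2 := h2
  · -- main case : a < T
    set c : ℝ := Q / b with hcdef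
    have hc : 0 < c := by positivity
    clear_value c
    set g : ℝ → ℝ := fun r => Real.exp (-(c * Real.sqrt r)) with hgdef
    set F : ℝ → ℝ := fun r =>
      -(2 * b ^ 2 / Q ^ 2) * (Real.exp (-(c * Real.sqrt r)) * (c * Real.sqrt r + 1))
      with hFdef
    have hg_cont : Continuous g := by
      apply Real.continuous_exp.comp
      exact (continuous_const.mul Real.continuous_sqrt).neg
    have hderiv : ∀ r ∈ Set.uIcc a T, HasDerivAt F (g r) r := by
      intro r hr
      rw [Set.uIcc_of_le haT.le] at hr
      have hr0 : 0 < r := lt_of_lt_of_le ha hr.1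
      have hs0 : 0 < Real.sqrt r := Real.sqrt_pos.mpr hr0
      have hsq : HasDerivAt Real.sqrt (1 / (2 * Real.sqrt r)) r :=
        Real.hasDerivAt_sqrt (ne_of_gt hr0)
      have h1 : HasDerivAt (fun r => c * Real.sqrt r) (c * (1 / (2 * Real.sqrt r))) r :=
        hsq.const_mul c
      have h2 : HasDerivAt (fun r => -(c * Real.sqrt r))
          (-(c * (1 / (2 * Real.sqrt r)))) r := h1.neg
      have h3 : HasDerivAt (fun r => Real.exp (-(c * Real.sqrt r)))
          (Real.exp (-(c * Real.sqrt r)) * (-(c * (1 / (2 * Real.sqrt r))))) r := h2.exp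
      have h4 : HasDerivAt (fun r => c * Real.sqrt r + 1) (c * (1 / (2 * Real.sqrt r))) r :=
        h1.add_const 1
      have h5 := (h3.mul h4).const_mul (-(2 * b ^ 2 / Q ^ 2))
      refine h5.congr_deriv ?_
      simp only [hgdef, hcdef]
      field_simp
      ring
    have hFa : F a = -(2 * b ^ 2 / Q ^ 2) * (Real.exp (-Q) * (Q + 1)) := by
      rw [hFdef]
      simp only
      rw [hadef, Real.sqrt_sq hb.le, hcdef]
      rw [div_mul_cancel₀ _ (ne_of_gt hb)]
    have hFT : F T ≤ 0 := by
      rw [hFdef]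
      simp only
      apply mul_nonpos_of_nonpos_of_nonneg
      · have : (0:ℝ) ≤ 2 * b ^ 2 / Q ^ 2 := by positivity
        linarith
      · have h1 : (0:ℝ) ≤ Real.exp (-(c * Real.sqrt T)) := (Real.exp_pos _).le
        have h2 : (0:ℝ) ≤ c * Real.sqrt T + 1 := by positivity
        positivity
    have hint_g : ∫ r in a..T, g r = F T - F a :=
      intervalIntegral.integral_eq_sub_of_hasDerivAt hderiv
        (hg_cont.intervalIntegrable a T)
    clear_value F
    have hIg : ∫ r in a..T, g r ≤ 2 * b ^ 2 / Q ^ 2 * (q * (Q + 1)) := by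
      rw [hint_g, hFa, hqdef]
      linarith [hFT]
    have hfg : ∫ r in a..T, f r ≤ ∫ r in a..T, g r := by
      apply intervalIntegral.integral_mono_on haT.le (hf_int a T)
        (hg_cont.intervalIntegrable a T)
      intro r hr
      exact hpoint r hr
    have h0a : ∫ r in (0:ℝ)..a, f r ≤ a := by
      have h1 : ∫ r in (0:ℝ)..a, f r ≤ ∫ r in (0:ℝ)..a, (1:ℝ) := by
        apply intervalIntegral.integral_mono_on ha.le (hf_int 0 a)
          intervalIntegrable_const
        intro r _; exact hf_le_one r
      rw [intervalIntegral.integral_const] at h1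
      simpa using h1
    have hsplit : (∫ r in (0:ℝ)..a, f r) + ∫ r in a..T, f r = ∫ r in (0:ℝ)..T, f r :=
      intervalIntegral.integral_add_adjacent_intervals (hf_int 0 a) (hf_int a T)
    have htotal : ∫ r in (0:ℝ)..T, f r ≤ a + 2 * b ^ 2 / Q ^ 2 * (q * (Q + 1)) := by
      rw [← hsplit]
      have := hfg.trans hIg
      linarith
    -- final scalar comparison
    have hfinal : a + 2 * b ^ 2 / Q ^ 2 * (q * (Q + 1)) ≤ 2 * a / (1 - q) ^ 2 := by
      rw [hadef]
      have hQ2 : (0:ℝ) < Q ^ 2 := by positivity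
      have h1q2 : (0:ℝ) < (1 - q) ^ 2 := by positivity
      have hmono : q * (Q + 1) / Q ^ 2 ≤ q * (Q + 1) / (1 - q) ^ 2 := by
        apply div_le_div_of_nonneg_left (by positivity) h1q2
        nlinarith
      rw [le_div_iff₀ h1q2]
      have hb2p : (0:ℝ) < b ^ 2 := by positivity
      -- (1-q)^2 + 2 q (Q+1) ≤ 2  follows from hkey
      have hineq : (1 - q) ^ 2 + 2 * (q * (Q + 1)) ≤ 2 := by nlinarith
      calc (b ^ 2 + 2 * b ^ 2 / Q ^ 2 * (q * (Q + 1))) * (1 - q) ^ 2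
          ≤ (b ^ 2 + 2 * b ^ 2 / (1 - q) ^ 2 * (q * (Q + 1))) * (1 - q) ^ 2 := by
            apply mul_le_mul_of_nonneg_right _ (le_of_lt h1q2)
            have := mul_le_mul_of_nonneg_left hmono (le_of_lt (by positivity : (0:ℝ) < 2 * b ^ 2))
            calc b ^ 2 + 2 * b ^ 2 / Q ^ 2 * (q * (Q + 1))
                = b ^ 2 + 2 * b ^ 2 * (q * (Q + 1) / Q ^ 2) := by ring
              _ ≤ b ^ 2 + 2 * b ^ 2 * (q * (Q + 1) / (1 - q) ^ 2) := by linarith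
              _ = b ^ 2 + 2 * b ^ 2 / (1 - q) ^ 2 * (q * (Q + 1)) := by ring
        _ = b ^ 2 * ((1 - q) ^ 2 + 2 * (q * (Q + 1))) := by field_simp
        _ ≤ b ^ 2 * 2 := by exact mul_le_mul_of_nonneg_left hineq hb2p.le
        _ = 2 * b ^ 2 := by ring
    exact htotal.trans hfinal
end

section
/- For every integer d ≥ 1, every real Q > 0, every integer ℓ ≥ 1, and every real R > 0, one has ∫_0^R t·e^{−Q·t^d·ℓ} dt ≤ ℓ^{−2/d} / (1 − e^{−Q})². -/
/-- For every integer `d ≥ 1`, real `Q > 0`, integer `ℓ ≥ 1`, real `R > 0`,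
`∫_0^R t·e^{−Q·t^d·ℓ} dt ≤ ℓ^{−2/d} / (1 − e^{−Q})²`. -/
theorem stmt_5 (d : ℕ) (hd : 1 ≤ d) (Q : ℝ) (hQ : 0 < Q) (ℓ : ℕ) (hℓ : 1 ≤ ℓ)
    (R : ℝ) (hR : 0 < R) :
    ∫ t in (0:ℝ)..R, t * Real.exp (-Q * t ^ d * ℓ)
      ≤ (ℓ : ℝ) ^ (-(2:ℝ) / d) / (1 - Real.exp (-Q)) ^ 2 := by
  have hℓpos : (0:ℝ) < ℓ := by positivity
  have hdne : (d:ℝ) ≠ 0 := by positivity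
  set ε : ℝ := (ℓ:ℝ) ^ (-(1:ℝ)/d) with hε
  have hεpos : 0 < ε := Real.rpow_pos_of_pos hℓpos _
  have hεd : ε ^ d * ℓ = 1 := by
    rw [hε, ← Real.rpow_natCast ((ℓ:ℝ) ^ (-(1:ℝ)/d)) d, ← Real.rpow_mul hℓpos.le,
      show (-(1:ℝ)/d) * d = -1 by field_simp, Real.rpow_neg_one]
    field_simp
  have hε2 : ε ^ 2 = (ℓ:ℝ) ^ (-(2:ℝ)/d) := by
    rw [hε, ← Real.rpow_natCast ((ℓ:ℝ) ^ (-(1:ℝ)/d)) 2, ← Real.rpow_mul hℓpos.le]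
    congr 1
    push_cast
    ring
  set f : ℝ → ℝ := fun t => t * Real.exp (-Q * t ^ d * ℓ) with hf
  have hfc : Continuous f := by fun_prop
  have hfnn : ∀ t, 0 ≤ t → 0 ≤ f t := fun t ht => mul_nonneg ht (Real.exp_pos _).le
  set x : ℝ := Real.exp (-Q) with hx
  have hx0 : 0 < x := Real.exp_pos _
  have hx1 : x < 1 := Real.exp_lt_one_iff.mpr (by linarith)
  set N : ℕ := ⌈R / ε⌉₊ with hN
  have hRN : R ≤ N * ε := by
    have := Nat.le_ceil (R / ε)
    rw [div_le_iff₀ hεpos] at this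
    simpa [hN] using this
  have hint : ∀ a b : ℝ, IntervalIntegrable f MeasureTheory.volume a b :=
    fun a b => hfc.intervalIntegrable a b
  have step1 : (∫ t in (0:ℝ)..R, f t) ≤ ∫ t in (0:ℝ)..(N*ε), f t := by
    apply intervalIntegral.integral_mono_interval le_rfl hR.le hRN _ (hint 0 (N*ε))
    filter_upwards [MeasureTheory.ae_restrict_mem measurableSet_Ioc] with t ht
    exact hfnn t ht.1.le
  have step2 : (∫ t in (0:ℝ)..(N*ε), f t)
      = ∑ k ∈ Finset.range N, ∫ t in (k*ε)..((k+1)*ε), f t := by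
    have := intervalIntegral.sum_integral_adjacent_intervals
      (a := fun k : ℕ => k * ε) (f := f) (μ := MeasureTheory.volume) (n := N)
      (fun k _ => hint _ _)
    simp only [Nat.cast_zero, zero_mul] at this
    rw [← this]
    push_cast
    rfl
  have piece : ∀ k : ℕ, (∫ t in ((k:ℝ)*ε)..(((k:ℝ)+1)*ε), f t) ≤ ((k:ℝ)+1) * x ^ k * ε ^ 2 := by
    intro k
    have hab : (k:ℝ)*ε ≤ ((k:ℝ)+1)*ε := by nlinarith
    have hb : (∫ t in ((k:ℝ)*ε)..(((k:ℝ)+1)*ε), f t)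
        ≤ ∫ _ in ((k:ℝ)*ε)..(((k:ℝ)+1)*ε), (((k:ℝ)+1)*ε) * x ^ k := by
      apply intervalIntegral.integral_mono_on hab (hint _ _) intervalIntegrable_const
      intro t ht
      obtain ⟨ht1, ht2⟩ := ht
      have ht0 : 0 ≤ t := le_trans (by positivity) ht1
      have h1 : (k:ℝ) ≤ t ^ d * ℓ := by
        have h2 : ((k:ℝ)*ε) ^ d ≤ t ^ d := pow_le_pow_left₀ (by positivity) ht1 d
        have h3 : ((k:ℝ)*ε) ^ d * ℓ = (k:ℝ) ^ d := by
          rw [mul_pow, mul_assoc, hεd, mul_one]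
        have h4 : (k:ℝ) ≤ (k:ℝ) ^ d := by
          exact_mod_cast Nat.le_self_pow (by omega) k
        nlinarith
      have hexp : Real.exp (-Q * t ^ d * ℓ) ≤ x ^ k := by
        rw [hx, ← Real.exp_nat_mul]
        exact Real.exp_le_exp.mpr (by nlinarith)
      calc f t = t * Real.exp (-Q * t ^ d * ℓ) := rfl
        _ ≤ (((k:ℝ)+1)*ε) * x ^ k :=
            mul_le_mul ht2 hexp (Real.exp_pos _).le (by positivity)
    rw [intervalIntegral.integral_const, smul_eq_mul] at hb
    calc (∫ t in ((k:ℝ)*ε)..(((k:ℝ)+1)*ε), f t)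
        ≤ (((k:ℝ)+1)*ε - (k:ℝ)*ε) * ((((k:ℝ)+1)*ε) * x ^ k) := hb
      _ = ((k:ℝ)+1) * x ^ k * ε ^ 2 := by ring
  have hnorm : ‖x‖ < 1 := by rwa [Real.norm_eq_abs, abs_of_pos hx0]
  have hS : HasSum (fun k : ℕ => ((k:ℝ)+1) * x ^ k) (1/(1-x)^2) := by
    have h := (hasSum_coe_mul_geometric_of_norm_lt_one (r := x) hnorm).add
      (hasSum_geometric_of_lt_one hx0.le hx1)
    have hfe : (fun n : ℕ => (n:ℝ) * x ^ n + x ^ n) = fun n : ℕ => ((n:ℝ)+1) * x ^ n := by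
      funext n; ring
    rw [hfe] at h
    convert h using 1
    have h1x : (1:ℝ) - x ≠ 0 := by linarith
    · rfl
    field_simp
    ring
  have sumle : ∑ k ∈ Finset.range N, ((k:ℝ)+1) * x ^ k ≤ 1/(1-x)^2 :=
    sum_le_hasSum _ (fun k _ => by positivity) hS
  calc (∫ t in (0:ℝ)..R, f t) ≤ ∫ t in (0:ℝ)..(N*ε), f t := step1
    _ = ∑ k ∈ Finset.range N, ∫ t in ((k:ℝ)*ε)..(((k:ℝ)+1)*ε), f t := by
        exact step2
    _ ≤ ∑ k ∈ Finset.range N, ((k:ℝ)+1) * x ^ k * ε ^ 2 :=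
        Finset.sum_le_sum (fun k _ => piece k)
    _ = (∑ k ∈ Finset.range N, ((k:ℝ)+1) * x ^ k) * ε ^ 2 := by
        rw [Finset.sum_mul]
    _ ≤ (1/(1-x)^2) * ε ^ 2 := by
        apply mul_le_mul_of_nonneg_right sumle (by positivity)
    _ = (ℓ:ℝ) ^ (-(2:ℝ)/d) / (1-x)^2 := by rw [hε2]; ring
end

section
/- Fix x ∈ M, let n ≥ 1, m ≥ 0, and let X_1,…,X_{n+m} be drawn i.i.d. from μ. Let x* be the sample point nearest to x in ρ (ties broken by index). Suppose an estimated distance d̂ is given which, almost surely over the draw of the sample, satisfies (1−δ)·ρ(X_i,X_j) ≤ d̂(i,j) ≤ (1+δ)·ρ(X_i,X_j) for all 1 ≤ i,j ≤ n+m, for a fixed δ ∈ (0,1). Let X_G^{(n)}(x*) denote the point among the first n samples with smallest d̂-distance to x* (ties broken by index). Then E[ ρ(x*, X_G^{(n)}(x*))² ] ≤ (2(1+δ)²/((1−δ)²·(1 − e^{−Q})²))·n^{−2/d} + diam(M)²·e^{−Q·R^d·n}. -/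
/-!
The `d̂`-nearest of the first `n` samples is at distance at most `(1 + δ) / (1 - δ) * Z` from `x*`,
where `Z` is the distance from `x*` to the nearest of the first `n` samples, so it suffices to
control the tail of `Z`.
If `Z > r > 0`, then `x*` is one of the last `m` samples and is determined by them alone; given
those, the first `n` independent samples must all avoid one ball of radius `r`, of mass at least
`Q r^d`, whence `P(Z > r) ≤ exp(-Q r^d n)` for `r ≤ R`. A discrete layer-cake decomposition at
scale `α = n^(-1/d)` turns these tails into `α² ∑ (2k + 1) q^k ≤ α² (1 + q) / (1 - q)²` with
`q = exp(-Q)`, and the event `Z > R` costs at most `diam(M)² exp(-Q R^d n)`. All these events are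
measurable because `M` is separable, which follows from the lower bound on ball masses by packing.
-/

open MeasureTheory Metric Set
open scoped ENNReal

theorem sum_range_two_mul_add_one_mul_pow_le {q : ℝ} (hq0 : 0 ≤ q) (hq1 : q < 1) (N : ℕ) :
    ∑ k ∈ Finset.range N, (2 * (k : ℝ) + 1) * q ^ k ≤ (1 + q) / (1 - q) ^ 2 := by
  have hq : ‖q‖ < 1 := by rwa [Real.norm_of_nonneg hq0]
  have hsum : HasSum (fun k : ℕ => (2 * (k : ℝ) + 1) * q ^ k) ((1 + q) / (1 - q) ^ 2) := by
    have h := ((hasSum_coe_mul_geometric_of_norm_lt_one hq).mul_left 2).add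
      (hasSum_geometric_of_lt_one hq0 hq1)
    have hq1' : 1 - q ≠ 0 := by linarith
    rwa [show (2 * (q / (1 - q) ^ 2) + (1 - q)⁻¹) = (1 + q) / (1 - q) ^ 2 by field_simp; ring,
      show (fun k : ℕ => 2 * (k * q ^ k) + q ^ k) = fun k : ℕ => (2 * (k : ℝ) + 1) * q ^ k
        from funext fun k => by ring] at h
  exact sum_le_hasSum _ (fun k _ => by positivity) hsum

/-- Discrete layer cake: the `k`-th layer pays for the increment `((k + 1) α)² - (k α)²`. -/
theorem min_sq_le_sum_indicator {α z : ℝ} (hα : 0 ≤ α) (hz : 0 ≤ z) (N : ℕ) :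
    min z (N * α) ^ 2 ≤ ∑ k ∈ Finset.range N,
      (Ioi ((k : ℝ) * α)).indicator (fun _ => (2 * (k : ℝ) + 1) * α ^ 2) z := by
  induction N with
  | zero => simp [hz]
  | succ N ih =>
    rw [Finset.sum_range_succ, Nat.cast_succ]
    rcases lt_or_ge ((N : ℝ) * α) z with h | h
    · rw [indicator_of_mem (mem_Ioi.mpr h)]
      rw [min_eq_right h.le] at ih
      have : min z ((N + 1) * α) ^ 2 ≤ ((N + 1) * α) ^ 2 :=
        pow_le_pow_left₀ (le_min hz (by positivity)) (min_le_right _ _) 2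
      nlinarith
    · have hmono : (N : ℝ) * α ≤ (N + 1) * α := by nlinarith
      rw [indicator_of_notMem (notMem_Ioi.mpr h), add_zero, min_eq_left (h.trans hmono)]
      rwa [min_eq_left h] at ih

theorem exp_neg_mul_mul_rpow_pow_le {Q N : ℝ} (hQ : 0 ≤ Q) (hN : 0 < N) {d : ℕ} (hd : 1 ≤ d)
    (k : ℕ) : Real.exp (-(Q * (k * N ^ (-(1 : ℝ) / d)) ^ d * N)) ≤ Real.exp (-Q) ^ k := by
  have hscale : (N ^ (-(1 : ℝ) / d)) ^ d * N = 1 := by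
    rw [← Real.rpow_natCast, ← Real.rpow_mul hN.le, div_mul_cancel₀ _ (by positivity),
      Real.rpow_neg_one, inv_mul_cancel₀ hN.ne']
  have hk : (k : ℝ) ≤ (k : ℝ) ^ d := by exact_mod_cast Nat.le_self_pow (by omega) k
  rw [← Real.exp_nat_mul, Real.exp_le_exp, mul_pow, mul_assoc Q, mul_assoc, hscale]
  nlinarith

theorem sq_le_sum_indicator_add_indicator {y z c D α R : ℝ} (hα : 0 < α) (hz : 0 ≤ z)
    (hy : 0 ≤ y) (hyz : y ≤ c * z) (hyD : y ≤ D) :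
    y ^ 2 ≤ ∑ k ∈ Finset.range ⌈R / α⌉₊,
        (Ioi ((k : ℝ) * α)).indicator (fun _ => c ^ 2 * ((2 * k + 1) * α ^ 2)) z
      + (Ioi R).indicator (fun _ => D ^ 2) z := by
  have hlayers : 0 ≤ ∑ k ∈ Finset.range ⌈R / α⌉₊,
      (Ioi ((k : ℝ) * α)).indicator (fun _ => c ^ 2 * ((2 * k + 1) * α ^ 2)) z :=
    Finset.sum_nonneg fun k _ => indicator_nonneg (fun _ _ => by positivity) _
  rcases le_or_gt z R with hzR | hzR
  · have hzK : z ≤ ⌈R / α⌉₊ * α := hzR.trans ((div_le_iff₀ hα).mp (Nat.le_ceil _))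
    calc y ^ 2 ≤ c ^ 2 * min z (⌈R / α⌉₊ * α) ^ 2 := by
          rw [min_eq_left hzK, ← mul_pow]
          exact pow_le_pow_left₀ hy hyz 2
      _ ≤ c ^ 2 * ∑ k ∈ Finset.range ⌈R / α⌉₊,
            (Ioi ((k : ℝ) * α)).indicator (fun _ => (2 * (k : ℝ) + 1) * α ^ 2) z := by
          gcongr
          exact min_sq_le_sum_indicator hα.le hz _
      _ ≤ _ := by
          rw [Finset.mul_sum]
          simp only [← indicator_const_mul]
          exact le_add_of_nonneg_right (indicator_nonneg (fun _ _ => sq_nonneg D) _)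
  · calc y ^ 2 ≤ D ^ 2 := pow_le_pow_left₀ hy hyD 2
      _ = (Ioi R).indicator (fun _ => D ^ 2) z :=
          (indicator_of_mem (mem_Ioi.mpr hzR) fun _ => D ^ 2).symm
      _ ≤ _ := le_add_of_nonneg_left hlayers

theorem integral_sq_le_of_le_mul_of_tail {Ω : Type*} [MeasurableSpace Ω] {P : Measure Ω}
    [IsProbabilityMeasure P] {f Z : Ω → ℝ} {c D α R q e : ℝ} (hZ : Measurable Z)
    (hZ0 : ∀ ω, 0 ≤ Z ω) (hf0 : ∀ ω, 0 ≤ f ω) (hfZ : ∀ᵐ ω ∂P, f ω ≤ c * Z ω)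
    (hfD : ∀ ω, f ω ≤ D) (hα : 0 < α) (hq0 : 0 ≤ q) (hq1 : q < 1)
    (htail : ∀ k : ℕ, 0 < k → k * α < R → P.real {ω | k * α < Z ω} ≤ q ^ k)
    (htailR : P.real {ω | R < Z ω} ≤ e) :
    ∫ ω, f ω ^ 2 ∂P ≤ c ^ 2 * α ^ 2 * ((1 + q) / (1 - q) ^ 2) + D ^ 2 * e := by
  set K := ⌈R / α⌉₊
  let layer : ℕ → Ω → ℝ := fun k =>
    (Z ⁻¹' Ioi (k * α)).indicator fun _ => c ^ 2 * ((2 * k + 1) * α ^ 2)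
  let far : Ω → ℝ := (Z ⁻¹' Ioi R).indicator fun _ => D ^ 2
  have hlayer_int : ∀ k, Integrable (layer k) P :=
    fun k => (integrable_const _).indicator (hZ measurableSet_Ioi)
  have hfar_int : Integrable far P := (integrable_const _).indicator (hZ measurableSet_Ioi)
  have hlayer_le : ∀ k ∈ Finset.range K,
      ∫ ω, layer k ω ∂P ≤ c ^ 2 * α ^ 2 * ((2 * k + 1) * q ^ k) := by
    intro k hk
    rw [integral_indicator_const _ (hZ measurableSet_Ioi), smul_eq_mul]
    have hprob : P.real (Z ⁻¹' Ioi (k * α)) ≤ q ^ k := by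
      rcases Nat.eq_zero_or_pos k with rfl | hk0
      · simp [measureReal_le_one]
      · exact htail k hk0 ((lt_div_iff₀ hα).mp (Nat.lt_ceil.mp (Finset.mem_range.mp hk)))
    calc P.real (Z ⁻¹' Ioi (k * α)) * (c ^ 2 * ((2 * k + 1) * α ^ 2))
        ≤ q ^ k * (c ^ 2 * ((2 * k + 1) * α ^ 2)) := by gcongr
      _ = _ := by ring
  calc ∫ ω, f ω ^ 2 ∂P ≤ ∫ ω, (∑ k ∈ Finset.range K, layer k ω + far ω) ∂P :=
        integral_mono_of_nonneg (ae_of_all _ fun ω => sq_nonneg _)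
          ((integrable_finsetSum _ fun k _ => hlayer_int k).add hfar_int)
          (hfZ.mono fun ω hω => sq_le_sum_indicator_add_indicator hα (hZ0 ω) (hf0 ω) hω (hfD ω))
    _ = ∑ k ∈ Finset.range K, ∫ ω, layer k ω ∂P + ∫ ω, far ω ∂P := by
        rw [integral_add (integrable_finsetSum _ fun k _ => hlayer_int k) hfar_int,
          integral_finsetSum _ fun k _ => hlayer_int k]
    _ ≤ ∑ k ∈ Finset.range K, c ^ 2 * α ^ 2 * ((2 * k + 1) * q ^ k) + D ^ 2 * e := by
        gcongr with k hk
        · exact hlayer_le k hk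
        · rw [integral_indicator_const _ (hZ measurableSet_Ioi), smul_eq_mul, mul_comm]
          exact mul_le_mul_of_nonneg_left htailR (sq_nonneg D)
    _ ≤ c ^ 2 * α ^ 2 * ((1 + q) / (1 - q) ^ 2) + D ^ 2 * e := by
        rw [← Finset.mul_sum]
        gcongr
        exact sum_range_two_mul_add_one_mul_pow_le hq0 hq1 K

theorem totallyBounded_univ_of_forall_le_measure_ball {M : Type*} [PseudoMetricSpace M]
    [MeasurableSpace M] [OpensMeasurableSpace M] (μ : Measure M) [IsFiniteMeasure μ]
    (h : ∀ r > 0, ∃ ε ≠ 0, ∀ z, ε ≤ μ (ball z r)) : TotallyBounded (univ : Set M) := by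
  rw [Metric.totallyBounded_iff]
  intro r hr
  by_contra hcover
  push Not at hcover
  obtain ⟨ε, hε, hball⟩ := h (r / 2) (half_pos hr)
  have : Std.Symm fun y z : M => r ≤ dist y z := ⟨fun y z h => by rwa [dist_comm]⟩
  obtain ⟨u, -, hu⟩ := exists_seq_of_forall_finset_exists' (fun _ : M => True)
    (fun y z => r ≤ dist y z) fun s _ => by
      obtain ⟨z, -, hz⟩ := not_subset.mp (hcover s s.finite_toSet)
      simp only [mem_iUnion, mem_ball, not_exists, not_lt] at hz
      exact ⟨z, trivial, fun y hy => by simpa [dist_comm] using hz y hy⟩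
  have hdisj : Pairwise (Function.onFun Disjoint fun k => ball (u k) (r / 2)) :=
    fun i j hij => ball_disjoint_ball (by linarith [hu hij])
  have : μ (⋃ k, ball (u k) (r / 2)) = ∞ := by
    rw [measure_iUnion hdisj fun _ => measurableSet_ball, ← top_le_iff,
      ← ENNReal.tsum_const_eq_top_of_ne_zero (α := ℕ) hε]
    exact ENNReal.tsum_le_tsum fun k => hball (u k)
  exact measure_ne_top μ _ this

theorem secondCountableTopology_of_forall_le_measure_ball {M : Type*} [PseudoMetricSpace M]
    [MeasurableSpace M] [OpensMeasurableSpace M] (μ : Measure M) [IsFiniteMeasure μ]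
    (h : ∀ r > 0, ∃ ε ≠ 0, ∀ z, ε ≤ μ (ball z r)) : SecondCountableTopology M :=
  haveI := TopologicalSpace.isSeparable_univ_iff.mp
    (totallyBounded_univ_of_forall_le_measure_ball μ h).isSeparable
  UniformSpace.secondCountable_of_separable M

theorem measure_pi_forall_le_dist_le {M ι : Type*} [PseudoMetricSpace M] [MeasurableSpace M]
    [OpensMeasurableSpace M] [Fintype ι] (μ : Measure M) [IsProbabilityMeasure μ] {z : M}
    {r p : ℝ} (hp : ENNReal.ofReal p ≤ μ (ball z r)) :
    Measure.pi (fun _ : ι => μ) {u | ∀ j, r ≤ dist z (u j)}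
      ≤ ENNReal.ofReal (Real.exp (-(p * Fintype.card ι))) := by
  have hcompl : {w | r ≤ dist z w} = (ball z r)ᶜ := by
    ext w; simp [dist_comm]
  have hsingle : μ (ball z r)ᶜ ≤ ENNReal.ofReal (Real.exp (-p)) := by
    rw [measure_compl measurableSet_ball (measure_ne_top μ _), measure_univ]
    calc 1 - μ (ball z r) ≤ 1 - ENNReal.ofReal p := tsub_le_tsub_left hp 1
      _ ≤ ENNReal.ofReal (Real.exp (-p)) := by
        rw [tsub_le_iff_right, ← ENNReal.ofReal_one]
        refine le_trans (ENNReal.ofReal_le_ofReal ?_) ENNReal.ofReal_add_le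
        linarith [Real.add_one_le_exp (-p)]
  calc Measure.pi (fun _ : ι => μ) {u | ∀ j, r ≤ dist z (u j)}
      = ∏ _j : ι, μ (ball z r)ᶜ := by
        rw [← hcompl, ← Measure.pi_pi]
        congr 1
        ext u
        simp
    _ ≤ ∏ _j : ι, ENNReal.ofReal (Real.exp (-p)) := Finset.prod_le_prod' fun _ _ => hsingle
    _ = ENNReal.ofReal (Real.exp (-(p * Fintype.card ι))) := by
        rw [Finset.prod_const, Finset.card_univ, ← ENNReal.ofReal_pow (Real.exp_nonneg _),
          ← Real.exp_nat_mul]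
        ring_nf

theorem measurable_of_isLeast_minimizers {Ω ι : Type*} [MeasurableSpace Ω] [LinearOrder ι]
    [Countable ι] [MeasurableSpace ι] {φ : ι → Ω → ℝ} (hφ : ∀ i, Measurable (φ i))
    {σ : Ω → ι} (hσ : ∀ ω, IsLeast {j | ∀ k, φ j ω ≤ φ k ω} (σ ω)) : Measurable σ := by
  refine measurable_to_countable' fun i => ?_
  have hfiber : σ ⁻¹' {i} = {ω | IsLeast {j | ∀ k, φ j ω ≤ φ k ω} i} := by
    ext ω
    exact ⟨fun h => h ▸ hσ ω, fun h => (hσ ω).unique h⟩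
  have hmin : ∀ j, MeasurableSet {ω | ∀ k, φ j ω ≤ φ k ω} := fun j => by
    simp only [ofPred_forall]
    exact MeasurableSet.iInter fun k => measurableSet_le (hφ j) (hφ k)
  have hleast : {ω | IsLeast {j | ∀ k, φ j ω ≤ φ k ω} i}
      = {ω | ∀ k, φ i ω ≤ φ k ω} ∩ ⋂ j, ({ω | ∀ k, φ j ω ≤ φ k ω}ᶜ ∪ {_ω | i ≤ j}) := by
    ext ω
    simp [IsLeast, lowerBounds, imp_iff_not_or]
  rw [hfiber, hleast]
  exact (hmin i).inter (.iInter fun j => (hmin j).compl.union (.const _))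

theorem eq_of_isLeast_minimizers_of_apply_eq {ι α β : Type*} [LinearOrder ι] [PartialOrder β]
    {g : α → β} {xs xs' : ι → α} {i i' : ι} (h : IsLeast {j | ∀ k, g (xs j) ≤ g (xs k)} i)
    (h' : IsLeast {j | ∀ k, g (xs' j) ≤ g (xs' k)} i') (hi : xs i = xs' i)
    (hi' : xs i' = xs' i') : i = i' := by
  have heq : g (xs i) = g (xs i') := by
    refine le_antisymm (h.1 i') ?_
    calc g (xs i') = g (xs' i') := by rw [hi']
      _ ≤ g (xs' i) := h'.1 i
      _ = g (xs i) := by rw [hi]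
  refine le_antisymm (h.2 fun k => ?_) (h'.2 fun k => ?_)
  · rw [← heq]; exact h.1 k
  · calc g (xs' i) = g (xs i) := by rw [hi]
      _ = g (xs' i') := by rw [heq, hi']
      _ ≤ g (xs' k) := h'.1 k

theorem measurePreserving_append {α : Type*} [MeasurableSpace α] (μ : Measure α) [SigmaFinite μ]
    (n m : ℕ) :
    MeasurePreserving (fun p : (Fin n → α) × (Fin m → α) => Fin.append p.1 p.2)
      ((Measure.pi fun _ : Fin n => μ).prod (Measure.pi fun _ : Fin m => μ))
      (Measure.pi fun _ : Fin (n + m) => μ) := by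
  convert (measurePreserving_piCongrLeft (fun _ : Fin (n + m) => μ) finSumFinEquiv).comp
    (measurePreserving_sumPiEquivProdPi_symm fun _ : Fin n ⊕ Fin m => μ) using 1
  ext p i
  refine Fin.addCases (fun j => ?_) (fun j => ?_) i <;>
    simp [MeasurableEquiv.piCongrLeft, Equiv.piCongrLeft, Equiv.piCongrLeft',
      MeasurableEquiv.coe_sumPiEquivProdPi_symm, Equiv.sumPiEquivProdPi]

section DistToHead

variable {M : Type*} [PseudoMetricSpace M] {n m : ℕ}

noncomputable def distToHead (σ : (Fin (n + m) → M) → Fin (n + m)) (xs : Fin (n + m) → M) : ℝ :=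
  ⨅ j : Fin n, dist (xs (σ xs)) (xs (Fin.castAdd m j))

theorem distToHead_nonneg (σ : (Fin (n + m) → M) → Fin (n + m)) (xs : Fin (n + m) → M) :
    0 ≤ distToHead σ xs :=
  Real.iInf_nonneg fun _ => dist_nonneg

theorem distToHead_le (σ : (Fin (n + m) → M) → Fin (n + m)) (xs : Fin (n + m) → M) (j : Fin n) :
    distToHead σ xs ≤ dist (xs (σ xs)) (xs (Fin.castAdd m j)) :=
  ciInf_le (Finite.bddBelow_range _) j

theorem measurable_distToHead [MeasurableSpace M] [BorelSpace M] [SecondCountableTopology M]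
    {σ : (Fin (n + m) → M) → Fin (n + m)} (hσ : Measurable σ) : Measurable (distToHead σ) := by
  have hnearest : Measurable fun xs : Fin (n + m) → M => xs (σ xs) :=
    (measurable_from_prod_countable_left
      (f := fun p : (Fin (n + m) → M) × Fin (n + m) => p.1 p.2)
      fun i => measurable_pi_apply i).comp (measurable_id.prodMk hσ)
  exact Measurable.iInf fun j => hnearest.dist (measurable_pi_apply _)

theorem dist_le_mul_distToHead {σ : (Fin (n + m) → M) → Fin (n + m)} {xs : Fin (n + m) → M}
    {dh : Fin (n + m) → ℝ} {δ : ℝ} (hδ : δ < 1) (g : Fin n)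
    (happrox : ∀ i, (1 - δ) * dist (xs i) (xs (σ xs)) ≤ dh i ∧
      dh i ≤ (1 + δ) * dist (xs i) (xs (σ xs)))
    (hg : ∀ j, dh (Fin.castAdd m g) ≤ dh (Fin.castAdd m j)) :
    dist (xs (σ xs)) (xs (Fin.castAdd m g)) ≤ (1 + δ) / (1 - δ) * distToHead σ xs := by
  have : Nonempty (Fin n) := ⟨g⟩
  obtain ⟨j, hj⟩ := exists_eq_ciInf_of_finite
    (f := fun j => dist (xs (σ xs)) (xs (Fin.castAdd m j)))
  rw [distToHead, ← hj, div_mul_eq_mul_div, le_div_iff₀ (by linarith), mul_comm]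
  calc (1 - δ) * dist (xs (σ xs)) (xs (Fin.castAdd m g))
      ≤ dh (Fin.castAdd m g) := dist_comm (xs (σ xs)) _ ▸ (happrox _).1
    _ ≤ dh (Fin.castAdd m j) := hg j
    _ ≤ (1 + δ) * dist (xs (σ xs)) (xs (Fin.castAdd m j)) :=
      dist_comm (xs (σ xs)) _ ▸ (happrox _).2

theorem exists_natAdd_of_lt_distToHead {σ : (Fin (n + m) → M) → Fin (n + m)}
    {xs : Fin (n + m) → M} {r : ℝ} (hr : 0 ≤ r) (h : r < distToHead σ xs) :
    ∃ k, σ xs = Fin.natAdd n k := by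
  cases hi : σ xs using Fin.addCases with
  | left j =>
    have := h.trans_le (distToHead_le σ xs j)
    simp only [hi, dist_self] at this
    linarith
  | right k => exact ⟨k, rfl⟩

theorem append_apply_eq_of_lt_distToHead (x : M) {σ : (Fin (n + m) → M) → Fin (n + m)}
    (hσ : ∀ xs, IsLeast {j | ∀ k, dist x (xs j) ≤ dist x (xs k)} (σ xs)) {r : ℝ} (hr : 0 ≤ r)
    {u u' : Fin n → M} {t : Fin m → M} (h : r < distToHead σ (Fin.append u t))
    (h' : r < distToHead σ (Fin.append u' t)) :
    Fin.append u t (σ (Fin.append u t)) = Fin.append u' t (σ (Fin.append u' t)) := by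
  obtain ⟨k, hk⟩ := exists_natAdd_of_lt_distToHead hr h
  obtain ⟨k', hk'⟩ := exists_natAdd_of_lt_distToHead hr h'
  have hσ_eq := eq_of_isLeast_minimizers_of_apply_eq (hσ (Fin.append u t)) (hσ (Fin.append u' t))
    (by rw [hk, Fin.append_right, Fin.append_right])
    (by rw [hk', Fin.append_right, Fin.append_right])
  rw [hσ_eq, hk', Fin.append_right, Fin.append_right]

variable [MeasurableSpace M] [BorelSpace M] (μ : Measure M) [IsProbabilityMeasure μ] (x : M)

theorem measure_lt_distToHead_append_le {σ : (Fin (n + m) → M) → Fin (n + m)}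
    (hσ : ∀ xs, IsLeast {j | ∀ k, dist x (xs j) ≤ dist x (xs k)} (σ xs)) {r p : ℝ} (hr : 0 ≤ r)
    (hp : ∀ z, ENNReal.ofReal p ≤ μ (ball z r)) (t : Fin m → M) :
    Measure.pi (fun _ : Fin n => μ) {u | r < distToHead σ (Fin.append u t)}
      ≤ ENNReal.ofReal (Real.exp (-(p * n))) := by
  rcases eq_empty_or_nonempty {u | r < distToHead σ (Fin.append u t)} with hempty | ⟨u₀, hu₀⟩
  · simp [hempty]
  -- every `u` in the slice has the same nearest point `z`, one of the last `m` samples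
  set z := Fin.append u₀ t (σ (Fin.append u₀ t))
  have hsub : {u | r < distToHead σ (Fin.append u t)} ⊆ {u | ∀ j, r ≤ dist z (u j)} := by
    intro u hu j
    have := (hu.trans_le (distToHead_le σ _ j)).le
    rwa [append_apply_eq_of_lt_distToHead x hσ hr hu hu₀, Fin.append_left] at this
  simpa using (measure_mono hsub).trans (measure_pi_forall_le_dist_le μ (ι := Fin n) (hp z))

theorem measureReal_lt_distToHead_le [SecondCountableTopology M]
    {σ : (Fin (n + m) → M) → Fin (n + m)} (hσm : Measurable σ)
    (hσ : ∀ xs, IsLeast {j | ∀ k, dist x (xs j) ≤ dist x (xs k)} (σ xs)) {r p : ℝ} (hr : 0 ≤ r)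
    (hp : ∀ z, ENNReal.ofReal p ≤ μ (ball z r)) :
    (Measure.pi fun _ : Fin (n + m) => μ).real {xs | r < distToHead σ xs}
      ≤ Real.exp (-(p * n)) := by
  have hA : MeasurableSet {xs | r < distToHead σ xs} :=
    measurableSet_lt measurable_const (measurable_distToHead hσm)
  have happend := measurePreserving_append μ n m
  refine ENNReal.toReal_le_of_le_ofReal (Real.exp_nonneg _) ?_
  rw [← happend.measure_preimage hA.nullMeasurableSet,
    Measure.prod_apply_symm (happend.measurable hA)]
  calc _ ≤ ∫⁻ _t, ENNReal.ofReal (Real.exp (-(p * n))) ∂(Measure.pi fun _ : Fin m => μ) :=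
        lintegral_mono fun t => measure_lt_distToHead_append_le μ x hσ hr hp t
    _ = ENNReal.ofReal (Real.exp (-(p * n))) := by simp

end DistToHead

theorem stmt_6_general {M : Type*} [MetricSpace M] [MeasurableSpace M] [BorelSpace M]
    (μ : Measure M) [IsProbabilityMeasure μ]
    (hMbdd : Bornology.IsBounded (Set.univ : Set M))
    (d : ℕ) (hd : 1 ≤ d) (Q R : ℝ) (hQ : 0 < Q) (hR : 0 < R)
    (hμ : ∀ (z : M) (r : ℝ), 0 < r → r ≤ R →
      ENNReal.ofReal (Q * r ^ d) ≤ μ (Metric.ball z r))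
    (x : M) (n m : ℕ) (hn : 1 ≤ n)
    (δ : ℝ) (hδ1 : δ < 1)
    (dhat : (Fin (n + m) → M) → Fin (n + m) → Fin (n + m) → ℝ)
    (happrox : ∀ᵐ xs ∂(Measure.pi fun _ : Fin (n + m) => μ), ∀ i j : Fin (n + m),
      (1 - δ) * dist (xs i) (xs j) ≤ dhat xs i j ∧
        dhat xs i j ≤ (1 + δ) * dist (xs i) (xs j))
    -- `x*`: the sample point nearest to `x`, ties broken by index
    (star : (Fin (n + m) → M) → Fin (n + m))
    (hstar_min : ∀ xs : Fin (n + m) → M, ∀ j : Fin (n + m), dist x (xs (star xs)) ≤ dist x (xs j))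
    (hstar_tie : ∀ xs : Fin (n + m) → M, ∀ j : Fin (n + m),
      dist x (xs j) ≤ dist x (xs (star xs)) → star xs ≤ j)
    -- `X_G^{(n)}(x*)`: the `d̂`-nearest among the first `n` samples, ties broken by index
    (G : (Fin (n + m) → M) → Fin n)
    (hG_min : ∀ xs : Fin (n + m) → M, ∀ j : Fin n,
      dhat xs (Fin.castAdd m (G xs)) (star xs) ≤ dhat xs (Fin.castAdd m j) (star xs)) :
    ∫ xs : Fin (n + m) → M, (dist (xs (star xs)) (xs (Fin.castAdd m (G xs)))) ^ 2
        ∂(Measure.pi fun _ : Fin (n + m) => μ)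
      ≤ (2 * (1 + δ) ^ 2 / ((1 - δ) ^ 2 * (1 - Real.exp (-Q)) ^ 2))
          * (n : ℝ) ^ (-(2:ℝ) / (d : ℝ))
        + (Metric.diam (Set.univ : Set M)) ^ 2 * Real.exp (-Q * R ^ d * n) := by
  have : SecondCountableTopology M := secondCountableTopology_of_forall_le_measure_ball μ
    fun r hr => ⟨_, (ENNReal.ofReal_pos.mpr (by positivity : 0 < Q * min r R ^ d)).ne',
      fun z => (hμ z _ (lt_min hr hR) (min_le_right _ _)).trans
        (measure_mono (ball_subset_ball (min_le_left _ _)))⟩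
  have hstar : ∀ xs, IsLeast {j | ∀ k, dist x (xs j) ≤ dist x (xs k)} (star xs) :=
    fun xs => ⟨hstar_min xs, fun j hj => hstar_tie xs j (hj (star xs))⟩
  have hstar_meas : Measurable star :=
    measurable_of_isLeast_minimizers (fun j => measurable_const.dist (measurable_pi_apply j)) hstar
  have htail : ∀ r, 0 < r → r ≤ R → (Measure.pi fun _ : Fin (n + m) => μ).real
      {xs | r < distToHead star xs} ≤ Real.exp (-(Q * r ^ d * n)) := fun r hr hrR =>
    measureReal_lt_distToHead_le μ x hstar_meas hstar hr.le fun z => hμ z r hr hrR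
  have hq1 : Real.exp (-Q) < 1 := Real.exp_lt_one_iff.mpr (neg_lt_zero.mpr hQ)
  have hn0 : (0 : ℝ) < n := by exact_mod_cast hn
  set α : ℝ := (n : ℝ) ^ (-(1 : ℝ) / d)
  have hα2 : α ^ 2 = (n : ℝ) ^ (-(2 : ℝ) / d) := by
    rw [← Real.rpow_natCast, ← Real.rpow_mul hn0.le]
    ring_nf
  have hcoef : ((1 + δ) / (1 - δ)) ^ 2 * ((1 + Real.exp (-Q)) / (1 - Real.exp (-Q)) ^ 2)
      ≤ 2 * (1 + δ) ^ 2 / ((1 - δ) ^ 2 * (1 - Real.exp (-Q)) ^ 2) := by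
    rw [div_pow, div_mul_div_comm, mul_comm ((1 + δ) ^ 2)]
    gcongr
    linarith
  calc _ ≤ ((1 + δ) / (1 - δ)) ^ 2 * α ^ 2 * ((1 + Real.exp (-Q)) / (1 - Real.exp (-Q)) ^ 2)
        + Metric.diam (univ : Set M) ^ 2 * Real.exp (-Q * R ^ d * n) :=
      integral_sq_le_of_le_mul_of_tail (measurable_distToHead hstar_meas)
        (distToHead_nonneg star) (fun _ => dist_nonneg)
        (happrox.mono fun xs h => dist_le_mul_distToHead hδ1 (G xs)
          (fun i => h i (star xs)) (hG_min xs))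
        (fun _ => dist_le_diam_of_mem hMbdd trivial trivial) (by positivity)
        (Real.exp_nonneg _) hq1
        (fun k hk hkR => (htail _ (by positivity) hkR.le).trans
          (exp_neg_mul_mul_rpow_pow_le hQ.le hn0 hd k))
        (by simpa only [neg_mul] using htail R hR le_rfl)
    _ ≤ _ := by
      rw [← hα2, mul_right_comm _ (α ^ 2)]
      gcongr ?_ * _ + _

/-- Fix `x ∈ M`, let `n ≥ 1`, `m ≥ 0`, and draw `X_1,…,X_{n+m}` i.i.d. from
`μ`.  Let `x*` be the sample point nearest to `x` in `ρ` (ties broken by index).  Suppose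
an estimated distance `d̂` satisfies, almost surely,
`(1−δ)·ρ(X_i,X_j) ≤ d̂(i,j) ≤ (1+δ)·ρ(X_i,X_j)` for all `i, j`, with `δ ∈ (0,1)`.
Let `X_G^{(n)}(x*)` be the point among the first `n` samples with smallest `d̂`-distance
to `x*` (ties broken by index).  Then
`E[ρ(x*, X_G^{(n)}(x*))²] ≤ (2(1+δ)²/((1−δ)²(1−e^{−Q})²))·n^{−2/d} + diam(M)²·e^{−Q·R^d·n}`. -/
theorem stmt_6 {M : Type*} [MetricSpace M] [MeasurableSpace M] [BorelSpace M]
    (μ : Measure M) [IsProbabilityMeasure μ]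
    (hMbdd : Bornology.IsBounded (Set.univ : Set M))
    (d : ℕ) (hd : 1 ≤ d) (Q R : ℝ) (hQ : 0 < Q) (hR : 0 < R)
    (hμ : ∀ (z : M) (r : ℝ), 0 < r → r ≤ R →
      ENNReal.ofReal (Q * r ^ d) ≤ μ (Metric.ball z r))
    (x : M) (n m : ℕ) (hn : 1 ≤ n)
    (δ : ℝ) (hδ0 : 0 < δ) (hδ1 : δ < 1)
    (dhat : (Fin (n + m) → M) → Fin (n + m) → Fin (n + m) → ℝ)
    (hmeas : ∀ i j : Fin (n + m), Measurable fun xs => dhat xs i j)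
    (hsymm : ∀ xs : Fin (n + m) → M, ∀ i j : Fin (n + m), dhat xs i j = dhat xs j i)
    (hnonneg : ∀ xs : Fin (n + m) → M, ∀ i j : Fin (n + m), 0 ≤ dhat xs i j)
    (happrox : ∀ᵐ xs ∂(Measure.pi fun _ : Fin (n + m) => μ), ∀ i j : Fin (n + m),
      (1 - δ) * dist (xs i) (xs j) ≤ dhat xs i j ∧
        dhat xs i j ≤ (1 + δ) * dist (xs i) (xs j))
    -- `x*`: the sample point nearest to `x`, ties broken by index
    (star : (Fin (n + m) → M) → Fin (n + m))
    (hstar_min : ∀ xs : Fin (n + m) → M, ∀ j : Fin (n + m), dist x (xs (star xs)) ≤ dist x (xs j))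
    (hstar_tie : ∀ xs : Fin (n + m) → M, ∀ j : Fin (n + m),
      dist x (xs j) ≤ dist x (xs (star xs)) → star xs ≤ j)
    -- `X_G^{(n)}(x*)`: the `d̂`-nearest among the first `n` samples, ties broken by index
    (G : (Fin (n + m) → M) → Fin n)
    (hG_min : ∀ xs : Fin (n + m) → M, ∀ j : Fin n,
      dhat xs (Fin.castAdd m (G xs)) (star xs) ≤ dhat xs (Fin.castAdd m j) (star xs))
    (hG_tie : ∀ xs : Fin (n + m) → M, ∀ j : Fin n,
      dhat xs (Fin.castAdd m j) (star xs) ≤ dhat xs (Fin.castAdd m (G xs)) (star xs) →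
        G xs ≤ j) :
    ∫ xs : Fin (n + m) → M, (dist (xs (star xs)) (xs (Fin.castAdd m (G xs)))) ^ 2
        ∂(Measure.pi fun _ : Fin (n + m) => μ)
      ≤ (2 * (1 + δ) ^ 2 / ((1 - δ) ^ 2 * (1 - Real.exp (-Q)) ^ 2))
          * (n : ℝ) ^ (-(2:ℝ) / (d : ℝ))
        + (Metric.diam (Set.univ : Set M)) ^ 2 * Real.exp (-Q * R ^ d * n) :=
  stmt_6_general μ hMbdd d hd Q R hQ hR hμ x n m hn δ hδ1 dhat happrox star hstar_min hstar_tie G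
    hG_min
end

section
/- Let (V, d) be a pseudometric space, let L ⊆ V be a finite nonempty set of labeled points, and let s ∈ L, u, v ∈ V be such that d(s, v) = d(s, u) + d(u, v) (i.e., u lies on a shortest path from s to v). Then for every j ≥ 1, if the set {s' ∈ L : d(s', u) < d(s, u)} has at least j elements, so does the set {s' ∈ L : d(s', v) < d(s, v)}. Equivalently, if s is among the j nearest labeled points to v (at most j−1 labeled points are strictly closer to v than s), then s is among the j nearest labeled points to u. -/
section

variable {V : Type*} [PseudoMetricSpace V]

theorem dist_lt_dist_of_dist_eq_add {s u v x : V} (hpath : dist s v = dist s u + dist u v)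
    (hx : dist x u < dist s u) : dist x v < dist s v :=
  calc dist x v ≤ dist x u + dist u v := dist_triangle x u v
    _ < dist s u + dist u v := by gcongr
    _ = dist s v := hpath.symm

theorem filter_dist_lt_subset_of_dist_eq_add (L : Finset V) {s u v : V}
    (hpath : dist s v = dist s u + dist u v) :
    L.filter (fun x => dist x u < dist s u) ⊆ L.filter (fun x => dist x v < dist s v) :=
  Finset.monotone_filter_right L fun _ _ => dist_lt_dist_of_dist_eq_add hpath

end

theorem stmt_10_general {V : Type*} [PseudoMetricSpace V]
    (L : Finset V) (s : V) (u v : V)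
    (hpath : dist s v = dist s u + dist u v)
    (j : ℕ)
    (hu : j ≤ (L.filter fun s' => dist s' u < dist s u).card) :
    j ≤ (L.filter fun s' => dist s' v < dist s v).card :=
  hu.trans (Finset.card_le_card (filter_dist_lt_subset_of_dist_eq_add L hpath))

/-- Let `(V, d)` be a pseudometric space, `L ⊆ V` a finite nonempty set of
labeled points, and `s ∈ L`, `u, v ∈ V` with `d(s, v) = d(s, u) + d(u, v)` (i.e. `u` lies
on a shortest path from `s` to `v`).  Then for every `j ≥ 1`, if
`{s' ∈ L : d(s', u) < d(s, u)}` has at least `j` elements, so does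
`{s' ∈ L : d(s', v) < d(s, v)}`. -/
theorem stmt_10 {V : Type*} [PseudoMetricSpace V]
    (L : Finset V) (hL : L.Nonempty) (s : V) (hs : s ∈ L) (u v : V)
    (hpath : dist s v = dist s u + dist u v)
    (j : ℕ) (hj : 1 ≤ j)
    (hu : j ≤ (L.filter fun s' => dist s' u < dist s u).card) :
    j ≤ (L.filter fun s' => dist s' v < dist s v).card :=
  stmt_10_general L s u v hpath j hu
end

section
/- Fix x ∈ M, let n ≥ k ≥ 1, m ≥ 0, and let X_1,…,X_{n+m} be drawn i.i.d. from μ. Let x* be the sample point nearest to x in ρ (ties broken by index). Suppose an estimated distance d̂ is given which, almost surely over the draw of the sample, satisfies (1−δ)·ρ(X_i,X_j) ≤ d̂(i,j) ≤ (1+δ)·ρ(X_i,X_j) for all 1 ≤ i,j ≤ n+m, for a fixed δ ∈ (0,1). For 1 ≤ i ≤ k let X_G^{(i,n)}(x*) denote the i-th closest point to x* among the first n samples in the distance d̂ (ties broken by index). Then there exists a constant c₁ > 0, depending only on Q, R, δ, diam(M) and d, such that E[ ( (1/k)·Σ_{i=1}^k f(X_G^{(i,n)}(x*)) − f(x*)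 )² ] ≤ L²·((1+δ)/(1−δ))²·c₁·⌊n/k⌋^{−2/d}. -/
open MeasureTheory

lemma aux_sel_sum_le {ι : Type} [DecidableEq ι] {k : ℕ} (v : ι → ℝ)
    (G T : Fin k → ι) (hG : Function.Injective G) (hT : Function.Injective T)
    (hmin : ∀ j : ι, (∀ i, G i ≠ j) → ∀ i, v (G i) ≤ v j) :
    ∑ i, v (G i) ≤ ∑ i, v (T i) := by
  classical
  set S : Finset ι := Finset.image G Finset.univ with hS
  set W : Finset ι := Finset.image T Finset.univ with hW
  have hSsum : ∑ i, v (G i) = ∑ a ∈ S, v a :=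
    (Finset.sum_image (fun a _ b _ h => hG h)).symm
  have hWsum : ∑ i, v (T i) = ∑ a ∈ W, v a :=
    (Finset.sum_image (fun a _ b _ h => hT h)).symm
  have hScard : S.card = k := by
    rw [hS, Finset.card_image_of_injective _ hG, Finset.card_univ, Fintype.card_fin]
  have hWcard : W.card = k := by
    rw [hW, Finset.card_image_of_injective _ hT, Finset.card_univ, Fintype.card_fin]
  have e1 : (S \ W).card + (S ∩ W).card = S.card := Finset.card_sdiff_add_card_inter S W
  have e2 : (W \ S).card + (S ∩ W).card = W.card := by
    rw [Finset.inter_comm]; exact Finset.card_sdiff_add_card_inter W S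
  have hcard : (S \ W).card = (W \ S).card := by omega
  have key : ∑ a ∈ S \ W, v a ≤ ∑ a ∈ W \ S, v a := by
    rcases (W \ S).eq_empty_or_nonempty with he | hne
    · have h0 : (S \ W) = ∅ := Finset.card_eq_zero.mp (by rw [hcard, he, Finset.card_empty])
      simp [h0, he]
    · obtain ⟨b₀, hb₀W, hb₀min⟩ := Finset.exists_min_image (W \ S) v hne
      have hb : ∀ a ∈ S \ W, v a ≤ v b₀ := by
        intro a ha
        obtain ⟨i, -, rfl⟩ := Finset.mem_image.mp (Finset.mem_sdiff.mp ha).1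
        refine hmin b₀ (fun i' h => ?_) i
        exact (Finset.mem_sdiff.mp hb₀W).2 (h ▸ Finset.mem_image_of_mem G (Finset.mem_univ i'))
      calc ∑ a ∈ S \ W, v a ≤ (S \ W).card • v b₀ := Finset.sum_le_card_nsmul _ _ _ hb
        _ = (W \ S).card • v b₀ := by rw [hcard]
        _ ≤ ∑ a ∈ W \ S, v a := Finset.card_nsmul_le_sum _ _ _ (fun a ha => hb₀min a ha)
  rw [hSsum, hWsum]
  calc ∑ a ∈ S, v a = ∑ a ∈ S ∩ W, v a + ∑ a ∈ S \ W, v a :=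
        (Finset.sum_inter_add_sum_sdiff ..).symm
    _ ≤ ∑ a ∈ S ∩ W, v a + ∑ a ∈ W \ S, v a := by linarith
    _ = ∑ a ∈ W ∩ S, v a + ∑ a ∈ W \ S, v a := by rw [Finset.inter_comm]
    _ = ∑ a ∈ W, v a := Finset.sum_inter_add_sum_sdiff ..

lemma aux_measurable_inf' {α : Type*} [MeasurableSpace α] {ι : Type*}
    (s : Finset ι) (hs : s.Nonempty) (f : ι → α → ℝ) (hf : ∀ i, Measurable (f i)) :
    Measurable fun a => s.inf' hs fun i => f i a := by
  induction hs using Finset.Nonempty.cons_induction with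
  | singleton i => simp only [Finset.inf'_singleton]; exact hf i
  | cons i s hi hne ih =>
      have heq : (fun a => (Finset.cons i s hi).inf' (Finset.cons_nonempty hi) fun j => f j a)
          = fun a => min (f i a) (s.inf' hne fun j => f j a) := by
        funext a; exact Finset.inf'_cons (H := hne) (f := fun j => f j a)
      rw [heq]
      exact (hf i).min ih

lemma aux_exp_neg_le {x : ℝ} (hx : 0 < x) : Real.exp (-x) ≤ 24 / x ^ 4 := by
  have h : x ^ 4 / 24 ≤ Real.exp x := by
    have := Real.pow_div_factorial_le_exp x hx.le 4
    norm_num [Nat.factorial] at this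
    linarith
  rw [Real.exp_neg, inv_le_comm₀ (Real.exp_pos x) (by positivity), inv_div]
  exact h

lemma aux_one_sub_pow_le {q : ℝ} (hq0 : 0 ≤ 1 - q) (s : ℕ) :
    (1 - q) ^ s ≤ Real.exp (-(q * s)) := by
  have h1 : 1 - q ≤ Real.exp (-q) := by
    have := Real.add_one_le_exp (-q); linarith
  calc (1 - q) ^ s ≤ Real.exp (-q) ^ s := pow_le_pow_left₀ hq0 h1 s
    _ = Real.exp (-(q * s)) := by rw [← Real.exp_nat_mul]; ring_nf

lemma aux_cylinder {M : Type} [MeasurableSpace M] (μ : Measure M) [IsProbabilityMeasure μ]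
    {N : ℕ} {ι : Type} [Fintype ι] (g : ι → Fin N) (hg : Function.Injective g)
    (A : Set M) :
    Measure.pi (fun _ : Fin N => μ) {xs | ∀ a : ι, xs (g a) ∈ A} ≤ μ A ^ (Fintype.card ι) := by
  classical
  have hsub : {xs : Fin N → M | ∀ a, xs (g a) ∈ A} ⊆
      Set.univ.pi (fun i => if i ∈ Finset.image g Finset.univ then A else Set.univ) := by
    intro xs hxs i _
    by_cases hi : i ∈ Finset.image g Finset.univ
    · simp only [hi, if_true]
      obtain ⟨a, -, rfl⟩ := Finset.mem_image.mp hi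
      exact hxs a
    · simp [hi]
  refine (measure_mono hsub).trans ?_
  rw [Measure.pi_pi]
  have h1 : ∀ i : Fin N, μ (if i ∈ Finset.image g Finset.univ then A else Set.univ)
      = if i ∈ Finset.image g Finset.univ then μ A else 1 := by
    intro i; split <;> simp
  rw [Finset.prod_congr rfl (fun i _ => h1 i), Finset.prod_ite_mem, Finset.univ_inter,
    Finset.prod_const, Finset.card_image_of_injective _ hg, Finset.card_univ]

lemma aux_compl_pow_toReal {M : Type} [MeasurableSpace M] (μ : Measure M)
    [IsProbabilityMeasure μ] (A : Set M) (hA : MeasurableSet A) (q : ℝ) (hq0 : 0 ≤ q)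
    (hμA : ENNReal.ofReal q ≤ μ A) (s : ℕ) : (μ Aᶜ ^ s).toReal ≤ (1 - q) ^ s := by
  have hA1 : μ A ≤ 1 := prob_le_one
  have h1 : (μ Aᶜ).toReal ≤ 1 - q := by
    rw [measure_compl hA (measure_ne_top μ A), measure_univ,
      ENNReal.toReal_sub_of_le hA1 ENNReal.one_ne_top]
    have h2 : q ≤ (μ A).toReal := by
      rw [← ENNReal.toReal_ofReal hq0]
      exact ENNReal.toReal_mono (measure_ne_top μ A) hμA
    simp only [ENNReal.toReal_one]
    linarith
  calc (μ Aᶜ ^ s).toReal = (μ Aᶜ).toReal ^ s := by rw [ENNReal.toReal_pow]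
    _ ≤ (1 - q) ^ s := pow_le_pow_left₀ ENNReal.toReal_nonneg h1 s

lemma aux_exp_neg_le' {x : ℝ} (hx : 0 < x) : Real.exp (-x) ≤ 24 / x ^ 4 := by
  have h : x ^ 4 / 24 ≤ Real.exp x := by
    have := Real.pow_div_factorial_le_exp x hx.le 4
    norm_num [Nat.factorial] at this
    linarith
  rw [Real.exp_neg, inv_le_comm₀ (Real.exp_pos x) (by positivity), inv_div]
  exact h

lemma aux_one_sub_pow_le' {q : ℝ} (hq0 : 0 ≤ 1 - q) (s : ℕ) :
    (1 - q) ^ s ≤ Real.exp (-(q * s)) := by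
  have h1 : 1 - q ≤ Real.exp (-q) := by
    have := Real.add_one_le_exp (-q); linarith
  calc (1 - q) ^ s ≤ Real.exp (-q) ^ s := pow_le_pow_left₀ hq0 h1 s
    _ = Real.exp (-(q * s)) := by rw [← Real.exp_nat_mul]; ring_nf

lemma aux_nn_sq_integral {α : Type*} [MeasurableSpace α] (P : Measure α) [IsProbabilityMeasure P]
    (d : ℕ) (hd : 1 ≤ d) (Q R Dm : ℝ) (hQ : 0 < Q) (hR : 0 < R) (hDm : 0 ≤ Dm)
    (s : ℕ) (hs : 1 ≤ s)
    (F : α → ℝ) (hF : Measurable F) (hF0 : ∀ ω, 0 ≤ F ω) (hFDm : ∀ ω, F ω ≤ Dm)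
    (htail : ∀ r : ℝ, 0 < r → r ≤ R → (P {ω | r < F ω}).toReal ≤ (1 - Q * r ^ d) ^ s)
    (hq1 : ∀ r : ℝ, 0 < r → r ≤ R → Q * r ^ d ≤ 1) :
    ∫ ω, F ω ^ 2 ∂P ≤ (25 * Q ^ (-(2:ℝ)/d) + 24 * Dm ^ 2 / (Q ^ 4 * R ^ (4 * d)))
        * (s : ℝ) ^ (-(2:ℝ)/d) := by
  have hd0 : (0:ℝ) < d := by exact_mod_cast Nat.lt_of_lt_of_le Nat.zero_lt_one hd
  have hd1 : (1:ℝ) ≤ d := by exact_mod_cast hd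
  have hs0 : (0:ℝ) < s := by exact_mod_cast Nat.lt_of_lt_of_le Nat.zero_lt_one hs
  have hs1 : (1:ℝ) ≤ s := by exact_mod_cast hs
  set a : ℝ := Q * s with ha
  have ha0 : 0 < a := by positivity
  set t₀ : ℝ := a ^ (-(2:ℝ)/d) with ht₀def
  have ht₀0 : 0 < t₀ := Real.rpow_pos_of_pos ha0 _
  set C₂ : ℝ := 24 / a ^ 4 with hC₂
  have hC₂0 : 0 ≤ C₂ := by positivity
  set C₃ : ℝ := 24 / (a * R ^ d) ^ 4 with hC₃
  have hC₃0 : 0 ≤ C₃ := by positivity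
  set tail : ℝ → ℝ := fun t => (P {ω | t < F ω ^ 2}).toReal with htaildef
  have hFint : Integrable (fun ω => F ω ^ 2) P := by
    refine ⟨(hF.pow_const 2).aestronglyMeasurable, ?_⟩
    apply HasFiniteIntegral.of_bounded (C := Dm ^ 2)
    filter_upwards with ω
    rw [Real.norm_eq_abs, abs_of_nonneg (by positivity)]
    exact pow_le_pow_left₀ (hF0 ω) (hFDm ω) 2
  rw [hFint.integral_eq_integral_meas_lt (Filter.Eventually.of_forall fun ω => by positivity)]
  -- tail facts
  have h_le_one : ∀ t : ℝ, tail t ≤ 1 := by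
    intro t
    have h1 : P {ω | t < F ω ^ 2} ≤ 1 := prob_le_one
    have := ENNReal.toReal_mono ENNReal.one_ne_top h1
    simpa using this
  have h_exp : ∀ r : ℝ, 0 < r → r ≤ R →
      (P {ω | r < F ω}).toReal ≤ Real.exp (-(a * r ^ d)) := by
    intro r hr0 hrR
    refine (htail r hr0 hrR).trans ?_
    have h0 : 0 ≤ 1 - Q * r ^ d := by linarith [hq1 r hr0 hrR]
    refine (aux_one_sub_pow_le' h0 s).trans ?_
    apply le_of_eq; congr 1; rw [ha]; ring
  have h_sub : ∀ t r : ℝ, 0 ≤ r → r ^ 2 ≤ t → tail t ≤ (P {ω | r < F ω}).toReal := by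
    intro t r hr0 hrt
    apply ENNReal.toReal_mono (measure_ne_top _ _)
    apply measure_mono
    intro ω hω
    simp only [Set.mem_setOf_eq] at *
    nlinarith [hF0 ω]
  have h_mid : ∀ t : ℝ, 0 < t → t ≤ R ^ 2 → tail t ≤ C₂ * t ^ (-(2*(d:ℝ))) := by
    intro t ht0 htR
    have hrt0 : 0 < Real.sqrt t := Real.sqrt_pos.mpr ht0
    have hrR : Real.sqrt t ≤ R := by
      rw [show R = Real.sqrt (R ^ 2) by rw [Real.sqrt_sq hR.le]]
      exact Real.sqrt_le_sqrt htR
    have h1 : tail t ≤ (P {ω | Real.sqrt t < F ω}).toReal := by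
      apply h_sub t _ hrt0.le
      rw [Real.sq_sqrt ht0.le]
    refine h1.trans ((h_exp _ hrt0 hrR).trans ?_)
    have h2 : 0 < a * Real.sqrt t ^ d := by positivity
    refine (aux_exp_neg_le' h2).trans ?_
    have h3 : (a * Real.sqrt t ^ d) ^ 4 = a ^ 4 * t ^ (2 * d) := by
      rw [mul_pow, ← pow_mul, show d * 4 = 2 * (2 * d) by ring, pow_mul,
        Real.sq_sqrt ht0.le]
    rw [h3, show -(2*(d:ℝ)) = -((2*d : ℕ) : ℝ) by push_cast; ring,
      Real.rpow_neg ht0.le, Real.rpow_natCast]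
    apply le_of_eq
    rw [hC₂]
    have h4 : t ^ (2*d) ≠ 0 := by positivity
    field_simp
  have h_big : ∀ t : ℝ, R ^ 2 < t → tail t ≤ C₃ := by
    intro t hRt
    have h1 : tail t ≤ (P {ω | R < F ω}).toReal := h_sub t R hR.le hRt.le
    exact h1.trans ((h_exp R hR le_rfl).trans (aux_exp_neg_le' (by positivity)))
  have h_zero : ∀ t : ℝ, Dm ^ 2 < t → tail t = 0 := by
    intro t hDt
    have h1 : {ω | t < F ω ^ 2} = ∅ := by
      ext ω
      simp only [Set.mem_setOf_eq, Set.mem_empty_iff_false, iff_false, not_lt]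
      calc F ω ^ 2 ≤ Dm ^ 2 := pow_le_pow_left₀ (hF0 ω) (hFDm ω) 2
        _ ≤ t := hDt.le
    rw [htaildef]
    simp [h1]
  -- majorant
  set f1 : ℝ → ℝ := (Set.Ioc (0:ℝ) t₀).indicator (fun _ => (1:ℝ)) with hf1
  set f2 : ℝ → ℝ := (Set.Ioi t₀).indicator (fun u => C₂ * u ^ (-(2*(d:ℝ)))) with hf2
  set f3 : ℝ → ℝ := (Set.Ioc (R^2) (Dm^2)).indicator (fun _ => C₃) with hf3
  have hmaj : ∀ t : ℝ, 0 < t → tail t ≤ f1 t + (f2 t + f3 t) := by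
    intro t ht
    have hn1 : (0:ℝ) ≤ f1 t := Set.indicator_nonneg (fun _ _ => zero_le_one) t
    have hn2 : (0:ℝ) ≤ f2 t := by
      refine Set.indicator_nonneg (fun u hu => ?_) t
      have hu0 : (0:ℝ) < u := ht₀0.trans (Set.mem_Ioi.mp hu)
      positivity
    have hn3 : (0:ℝ) ≤ f3 t := Set.indicator_nonneg (fun _ _ => hC₃0) t
    rcases le_or_gt t t₀ with h1 | h1
    · have hv : f1 t = 1 := by rw [hf1]; exact Set.indicator_of_mem (Set.mem_Ioc.mpr ⟨ht, h1⟩) _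
      have := h_le_one t
      linarith
    · have hv1 : f1 t = 0 := by
        rw [hf1]
        exact Set.indicator_of_notMem (fun hmem => absurd hmem.2 (not_le.mpr h1)) _
      rcases le_or_gt t (R^2) with h2 | h2
      · have hv2 : f2 t = C₂ * t ^ (-(2*(d:ℝ))) := by
          rw [hf2]; exact Set.indicator_of_mem (Set.mem_Ioi.mpr h1) _
        have := h_mid t ht h2
        linarith
      · rcases le_or_gt t (Dm^2) with h3 | h3
        · have hv3 : f3 t = C₃ := by rw [hf3]; exact Set.indicator_of_mem (Set.mem_Ioc.mpr ⟨h2, h3⟩) _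
          have := h_big t h2
          linarith
        · have := h_zero t h3
          linarith
  -- integrability of majorant pieces
  have hres : ∀ (S : Set ℝ), MeasurableSet S → S ⊆ Set.Ioi (0:ℝ) →
      (volume.restrict (Set.Ioi (0:ℝ))).restrict S = volume.restrict S := by
    intro S hS hsub
    rw [Measure.restrict_restrict hS, Set.inter_eq_left.mpr hsub]
  have hsub1 : Set.Ioc (0:ℝ) t₀ ⊆ Set.Ioi 0 := fun y hy => hy.1
  have hsub2 : Set.Ioi t₀ ⊆ Set.Ioi (0:ℝ) := Set.Ioi_subset_Ioi ht₀0.le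
  have hsub3 : Set.Ioc (R^2) (Dm^2) ⊆ Set.Ioi (0:ℝ) := fun y hy =>
    lt_trans (by positivity) hy.1
  have hI1 : Integrable f1 (volume.restrict (Set.Ioi (0:ℝ))) := by
    rw [hf1, integrable_indicator_iff measurableSet_Ioc]
    show Integrable _ ((volume.restrict (Set.Ioi (0:ℝ))).restrict (Set.Ioc 0 t₀))
    rw [hres _ measurableSet_Ioc hsub1]
    refine integrable_const_iff.mpr (Or.inr ?_)
    rw [isFiniteMeasure_restrict, Real.volume_Ioc]
    exact ENNReal.ofReal_ne_top
  have hlt : -(2*(d:ℝ)) < -1 := by nlinarith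
  have hI2 : Integrable f2 (volume.restrict (Set.Ioi (0:ℝ))) := by
    rw [hf2, integrable_indicator_iff measurableSet_Ioi]
    show Integrable _ ((volume.restrict (Set.Ioi (0:ℝ))).restrict (Set.Ioi t₀))
    rw [hres _ measurableSet_Ioi hsub2]
    exact (integrableOn_Ioi_rpow_of_lt hlt ht₀0).const_mul C₂
  have hI3 : Integrable f3 (volume.restrict (Set.Ioi (0:ℝ))) := by
    rw [hf3, integrable_indicator_iff measurableSet_Ioc]
    show Integrable _ ((volume.restrict (Set.Ioi (0:ℝ))).restrict (Set.Ioc (R^2) (Dm^2)))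
    rw [hres _ measurableSet_Ioc hsub3]
    refine integrable_const_iff.mpr (Or.inr ?_)
    rw [isFiniteMeasure_restrict, Real.volume_Ioc]
    exact ENNReal.ofReal_ne_top
  -- integral values
  have hInt1 : ∫ t in Set.Ioi (0:ℝ), f1 t = t₀ := by
    rw [hf1, integral_indicator measurableSet_Ioc, hres _ measurableSet_Ioc hsub1,
      setIntegral_const, Real.volume_real_Ioc_of_le ht₀0.le, smul_eq_mul, mul_one, sub_zero]
  have hne2d : -(2*(d:ℝ)) + 1 ≠ 0 := by nlinarith
  have hInt2 : ∫ t in Set.Ioi (0:ℝ), f2 t ≤ 24 * a ^ (-(2:ℝ)/d) := by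
    rw [hf2, integral_indicator measurableSet_Ioi, hres _ measurableSet_Ioi hsub2,
      integral_const_mul, integral_Ioi_rpow_of_lt hlt ht₀0]
    have ht₀E : t₀ ^ (-(2*(d:ℝ)) + 1) = a ^ ((4:ℝ) - 2/d) := by
      rw [ht₀def, ← Real.rpow_mul ha0.le]
      congr 1
      field_simp
      ring
    have hval : C₂ * t₀ ^ (-(2*(d:ℝ)) + 1) = 24 * a ^ (-(2:ℝ)/d) := by
      rw [ht₀E, hC₂, show ((4:ℝ) - 2/d) = (4:ℝ) + (-(2:ℝ)/d) by ring, Real.rpow_add ha0,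
        show a ^ (4:ℝ) = a ^ (4:ℕ) by rw [← Real.rpow_natCast]; norm_num]
      field_simp
    have hE : -(2*(d:ℝ)) + 1 = -(2*(d:ℝ) - 1) := by ring
    have hstep : C₂ * (-t₀ ^ (-(2*(d:ℝ)) + 1) / (-(2*(d:ℝ)) + 1))
        = 24 * a ^ (-(2:ℝ)/d) / (2*(d:ℝ) - 1) := by
      have h5 : -t₀ ^ (-(2*(d:ℝ)) + 1) / (-(2*(d:ℝ)) + 1)
          = t₀ ^ (-(2*(d:ℝ)) + 1) / (2*(d:ℝ) - 1) := by
        rw [hE, neg_div_neg_eq]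
      rw [h5, ← mul_div_assoc, hval]
    rw [hstep]
    exact div_le_self (by positivity) (by linarith)
  have hInt3 : ∫ t in Set.Ioi (0:ℝ), f3 t ≤ C₃ * Dm ^ 2 := by
    rw [hf3, integral_indicator measurableSet_Ioc, hres _ measurableSet_Ioc hsub3,
      setIntegral_const, Real.volume_real_Ioc, smul_eq_mul]
    rcases le_total (Dm^2 - R^2) 0 with h | h
    · rw [max_eq_right h, zero_mul]
      positivity
    · rw [max_eq_left h, mul_comm]
      have : Dm ^ 2 - R ^ 2 ≤ Dm ^ 2 := by nlinarith
      exact mul_le_mul_of_nonneg_left this hC₃0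
  -- combine
  have hI23 : Integrable (fun t => f2 t + f3 t) (volume.restrict (Set.Ioi (0:ℝ))) :=
    hI2.add hI3
  have hI123 : Integrable (fun t => f1 t + (f2 t + f3 t)) (volume.restrict (Set.Ioi (0:ℝ))) :=
    hI1.add hI23
  refine le_trans (integral_mono_of_nonneg (g := fun t => f1 t + (f2 t + f3 t))
      (Filter.Eventually.of_forall fun t => ENNReal.toReal_nonneg)
      hI123 ?_) ?_
  · filter_upwards [ae_restrict_mem measurableSet_Ioi] with t ht
    exact hmaj t ht
  · rw [integral_add hI1 hI23, integral_add hI2 hI3, hInt1]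
    have hsplit : a ^ (-(2:ℝ)/d) = Q ^ (-(2:ℝ)/d) * (s:ℝ) ^ (-(2:ℝ)/d) := by
      rw [ha, Real.mul_rpow hQ.le hs0.le]
    have hC3v : C₃ * Dm ^ 2 = (24 * Dm ^ 2 / (Q ^ 4 * R ^ (4*d))) * (s:ℝ) ^ (-(4:ℝ)) := by
      have hexp : (a * R ^ d) ^ 4 = Q ^ 4 * R ^ (4*d) * (s:ℝ) ^ 4 := by
        rw [ha, mul_pow, mul_pow, ← pow_mul, mul_comm d 4]; ring
      rw [hC₃, hexp, show ((s:ℝ)) ^ (-(4:ℝ)) = ((s:ℝ) ^ (4:ℕ))⁻¹ by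
        rw [← Real.rpow_natCast (s:ℝ) 4, ← Real.rpow_neg hs0.le]; norm_num]
      have h1 : ((s:ℝ))^(4:ℕ) ≠ 0 := by positivity
      have h2 : Q^4 * R^(4*d) ≠ 0 := by positivity
      field_simp
    have hs4 : (s:ℝ) ^ (-(4:ℝ)) ≤ (s:ℝ) ^ (-(2:ℝ)/d) := by
      apply Real.rpow_le_rpow_of_exponent_le hs1
      have h2d : 2/(d:ℝ) ≤ 4 := by rw [div_le_iff₀ hd0]; nlinarith
      rw [neg_div]
      linarith
    have hpos : (0:ℝ) ≤ 24 * Dm ^ 2 / (Q ^ 4 * R ^ (4*d)) := by positivity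
    have hfin := mul_le_mul_of_nonneg_left hs4 hpos
    calc t₀ + ((∫ t in Set.Ioi (0:ℝ), f2 t) + ∫ t in Set.Ioi (0:ℝ), f3 t)
        ≤ t₀ + (24 * a ^ (-(2:ℝ)/d) + C₃ * Dm ^ 2) := by
          have := hInt2; have := hInt3; linarith
      _ = 25 * a ^ (-(2:ℝ)/d) + C₃ * Dm ^ 2 := by rw [ht₀def]; ring
      _ ≤ 25 * (Q ^ (-(2:ℝ)/d) * (s:ℝ) ^ (-(2:ℝ)/d))
            + (24 * Dm ^ 2 / (Q ^ 4 * R ^ (4*d))) * (s:ℝ) ^ (-(2:ℝ)/d) := by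
          rw [hsplit, hC3v]
          linarith
      _ = (25 * Q ^ (-(2:ℝ)/d) + 24 * Dm ^ 2 / (Q ^ 4 * R ^ (4 * d)))
            * (s:ℝ) ^ (-(2:ℝ)/d) := by ring


set_option maxHeartbeats 1600000 in
/-- Fix `x ∈ M`, `n ≥ k ≥ 1`, `m ≥ 0`, and draw `X_1,…,X_{n+m}` i.i.d.
from `μ`, where `μ(B_z(r)) ≥ Q·r^d` for all `z` and `0 < r ≤ R`.  Let `x*` be the sample
point nearest to `x` (ties broken by index).  Suppose an estimated distance `d̂`
almost surely satisfies `(1−δ)·ρ(X_i,X_j) ≤ d̂(i,j) ≤ (1+δ)·ρ(X_i,X_j)` for all `i, j`,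
`δ ∈ (0,1)`.  For `1 ≤ i ≤ k`, let `X_G^{(i,n)}(x*)` be the `i`-th closest point to `x*`
among the first `n` samples in the distance `d̂` (ties broken by index).  Then there is a
constant `c₁ > 0` depending only on `Q, R, δ, diam(M)` and `d` with
`E[((1/k)·Σᵢ f(X_G^{(i,n)}(x*)) − f(x*))²] ≤ L²·((1+δ)/(1−δ))²·c₁·⌊n/k⌋^{−2/d}`
for every `L`-Lipschitz `f`. -/
theorem stmt_11 (d : ℕ) (hd : 1 ≤ d) (Q R δ Dm : ℝ) (hQ : 0 < Q) (hR : 0 < R)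
    (hδ0 : 0 < δ) (hδ1 : δ < 1) (hDm : 0 ≤ Dm) :
    ∃ c₁ : ℝ, 0 < c₁ ∧
      ∀ (M : Type) [MetricSpace M] [MeasurableSpace M] [BorelSpace M]
        (μ : Measure M) [IsProbabilityMeasure μ],
        Bornology.IsBounded (Set.univ : Set M) →
        Metric.diam (Set.univ : Set M) = Dm →
        (∀ (z : M) (r : ℝ), 0 < r → r ≤ R →
          ENNReal.ofReal (Q * r ^ d) ≤ μ (Metric.ball z r)) →
        ∀ (f : M → ℝ) (L : ℝ), (∀ u v : M, |f u - f v| ≤ L * dist u v) →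
        ∀ (n m k : ℕ), 1 ≤ k → k ≤ n →
        ∀ (x : M)
          (dhat : (Fin (n + m) → M) → Fin (n + m) → Fin (n + m) → ℝ),
          (∀ i j : Fin (n + m), Measurable fun xs => dhat xs i j) →
          (∀ xs : Fin (n + m) → M, ∀ i j : Fin (n + m), dhat xs i j = dhat xs j i) →
          (∀ xs : Fin (n + m) → M, ∀ i j : Fin (n + m), 0 ≤ dhat xs i j) →
          (∀ᵐ xs ∂(Measure.pi fun _ : Fin (n + m) => μ), ∀ i j : Fin (n + m),
            (1 - δ) * dist (xs i) (xs j) ≤ dhat xs i j ∧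
              dhat xs i j ≤ (1 + δ) * dist (xs i) (xs j)) →
        -- `x*`: the sample point nearest to `x`, ties broken by index
        ∀ (star : (Fin (n + m) → M) → Fin (n + m)),
          (∀ xs : Fin (n + m) → M, ∀ j : Fin (n + m),
            dist x (xs (star xs)) ≤ dist x (xs j)) →
          (∀ xs : Fin (n + m) → M, ∀ j : Fin (n + m),
            dist x (xs j) ≤ dist x (xs (star xs)) → star xs ≤ j) →
        -- `Gsel xs i` is the index (among the first `n` samples) of the `(i+1)`-th
        -- closest labeled point to `x*` in the distance `d̂`, ties broken by index:
        -- it is increasing in the lexicographic (d̂-value, index) order, and every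
        -- unselected labeled index comes later in that order.
        ∀ (Gsel : (Fin (n + m) → M) → Fin k → Fin n),
          (∀ xs : Fin (n + m) → M, ∀ i i' : Fin k, i < i' →
            dhat xs (Fin.castAdd m (Gsel xs i)) (star xs)
                < dhat xs (Fin.castAdd m (Gsel xs i')) (star xs) ∨
              (dhat xs (Fin.castAdd m (Gsel xs i)) (star xs)
                  = dhat xs (Fin.castAdd m (Gsel xs i')) (star xs) ∧
                Gsel xs i < Gsel xs i')) →
          (∀ xs : Fin (n + m) → M, ∀ j : Fin n, (∀ i : Fin k, Gsel xs i ≠ j) →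
            ∀ i : Fin k,
              dhat xs (Fin.castAdd m (Gsel xs i)) (star xs)
                  < dhat xs (Fin.castAdd m j) (star xs) ∨
                (dhat xs (Fin.castAdd m (Gsel xs i)) (star xs)
                    = dhat xs (Fin.castAdd m j) (star xs) ∧
                  Gsel xs i < j)) →
        ∫ xs : Fin (n + m) → M,
            ((1 / (k : ℝ)) * ∑ i : Fin k, f (xs (Fin.castAdd m (Gsel xs i)))
              - f (xs (star xs))) ^ 2
            ∂(Measure.pi fun _ : Fin (n + m) => μ)
          ≤ L ^ 2 * ((1 + δ) / (1 - δ)) ^ 2 * c₁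
              * ((n / k : ℕ) : ℝ) ^ (-(2:ℝ) / (d : ℝ)) := by
  
  classical
  set c : ℝ := 25 * Q ^ (-(2:ℝ)/d) + 24 * Dm ^ 2 / (Q ^ 4 * R ^ (4 * d)) with hcdef
  have hc0 : 0 < c := by
    have h1 : 0 < Q ^ (-(2:ℝ)/d) := Real.rpow_pos_of_pos hQ _
    have h2 : 0 ≤ 24 * Dm ^ 2 / (Q ^ 4 * R ^ (4 * d)) := by positivity
    rw [hcdef]; linarith
  refine ⟨4 * c, by linarith, ?_⟩
  intro M _ _ _ μ _ hbdd hdiam hball f L hLip n m k hk1 hkn x dhat hdmeas hdsymm hdnn hdae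
    star hstar1 hstar2 Gsel hG1 hG2
  set P : Measure (Fin (n + m) → M) := Measure.pi fun _ : Fin (n + m) => μ with hPdef
  set s : ℕ := n / k with hsdef
  have hk0 : 0 < k := Nat.lt_of_lt_of_le Nat.zero_lt_one hk1
  have hs1 : 1 ≤ s := (Nat.one_le_div_iff hk0).mpr hkn
  have hs0 : 0 < s := Nat.lt_of_lt_of_le Nat.zero_lt_one hs1
  have hkr : (0:ℝ) < k := by exact_mod_cast hk0
  have hδ1' : (0:ℝ) < 1 - δ := by linarith
  have hδ1'' : (0:ℝ) < 1 + δ := by linarith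
  -- Lipschitz constant, made nonnegative
  set L' : ℝ := max L 0 with hL'def
  have hL'0 : 0 ≤ L' := le_max_right _ _
  have hLip' : ∀ u v : M, |f u - f v| ≤ L' * dist u v := fun u v =>
    (hLip u v).trans (mul_le_mul_of_nonneg_right (le_max_left _ _) dist_nonneg)
  have hL2 : L' ^ 2 ≤ L ^ 2 := by
    rcases le_or_gt 0 L with h | h
    · rw [hL'def, max_eq_left h]
    · rw [hL'def, max_eq_right h.le]
      nlinarith [sq_nonneg L]
  -- blocks
  have hsk : ∀ (j : Fin k) (b : Fin s), j.1 * s + b.1 < n := by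
    intro j b
    have h1 : j.1 * s + b.1 < (j.1 + 1) * s := by
      have := b.2; nlinarith [j.2]
    have h2 : (j.1 + 1) * s ≤ k * s := Nat.mul_le_mul_right s j.2
    have h3 : k * s ≤ n := by
      rw [hsdef, mul_comm]
      exact Nat.div_mul_le_self n k
    omega
  set e : Fin k → Fin s → Fin n := fun j b => ⟨j.1 * s + b.1, hsk j b⟩ with hedef
  set idx : Fin k → Fin s → Fin (n + m) := fun j b => Fin.castAdd m (e j b) with hidxdef
  have he : ∀ (j j' : Fin k) (b b' : Fin s), e j b = e j' b' → j = j' := by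
    intro j j' b b' h
    have h1 : j.1 * s + b.1 = j'.1 * s + b'.1 := by
      have := congrArg Fin.val h
      simpa [hedef] using this
    have e1 : (j.1 * s + b.1) / s = j.1 := by
      rw [mul_comm, Nat.mul_add_div hs0, Nat.div_eq_of_lt b.2, Nat.add_zero]
    have e2 : (j'.1 * s + b'.1) / s = j'.1 := by
      rw [mul_comm, Nat.mul_add_div hs0, Nat.div_eq_of_lt b'.2, Nat.add_zero]
    have : j.1 = j'.1 := by rw [← e1, ← e2, h1]
    exact Fin.ext this
  haveI : Nonempty (Fin s) := ⟨⟨0, hs0⟩⟩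
  have hne : (Finset.univ : Finset (Fin s)).Nonempty := Finset.univ_nonempty
  set N : Fin k → (Fin (n + m) → M) → ℝ :=
    fun j xs => Finset.univ.inf' hne fun b => dist x (xs (idx j b)) with hNdef
  have hN0 : ∀ j xs, 0 ≤ N j xs := by
    intro j xs
    exact Finset.le_inf' hne _ fun b _ => dist_nonneg
  have hNle : ∀ j xs b, N j xs ≤ dist x (xs (idx j b)) := by
    intro j xs b
    exact Finset.inf'_le _ (Finset.mem_univ b)
  have hdistDm : ∀ u v : M, dist u v ≤ Dm := by
    intro u v
    rw [← hdiam]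
    exact Metric.dist_le_diam_of_mem hbdd (Set.mem_univ _) (Set.mem_univ _)
  have hNDm : ∀ j xs, N j xs ≤ Dm := by
    intro j xs
    exact (hNle j xs ⟨0, hs0⟩).trans (hdistDm _ _)
  have hNmeas : ∀ j, Measurable (N j) := by
    intro j
    have hm : Measurable fun xs : Fin (n + m) → M =>
        Finset.univ.inf' hne fun b : Fin s => dist x (xs (idx j b)) := by
      refine aux_measurable_inf' Finset.univ hne
        (fun (b : Fin s) (xs : Fin (n + m) → M) => dist x (xs (idx j b))) (fun b => ?_)
      exact ((continuous_const.dist continuous_id).measurable).comp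
        (measurable_pi_apply (idx j b))
    exact hm
  set C0 : ℝ := L' ^ 2 * ((1 + δ) / (1 - δ)) ^ 2 * 4 / k with hC0def
  have hNint : ∀ j, Integrable (fun xs => N j xs ^ 2) P := by
    intro j
    refine ⟨((hNmeas j).pow_const 2).aestronglyMeasurable, ?_⟩
    apply HasFiniteIntegral.of_bounded (C := Dm ^ 2)
    filter_upwards with xs
    rw [Real.norm_eq_abs, abs_of_nonneg (by positivity)]
    exact pow_le_pow_left₀ (hN0 j xs) (hNDm j xs) 2
  have hGint : Integrable (fun xs => C0 * ∑ j : Fin k, N j xs ^ 2) P :=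
    (integrable_finset_sum Finset.univ fun j _ => hNint j).const_mul C0
  -- pointwise bound on the good event
  have hpt : ∀ xs : Fin (n + m) → M,
      (∀ i j : Fin (n + m), (1 - δ) * dist (xs i) (xs j) ≤ dhat xs i j ∧
        dhat xs i j ≤ (1 + δ) * dist (xs i) (xs j)) →
      ((1 / (k : ℝ)) * ∑ i : Fin k, f (xs (Fin.castAdd m (Gsel xs i)))
          - f (xs (star xs))) ^ 2 ≤ C0 * ∑ j : Fin k, N j xs ^ 2 := by
    intro xs hx
    have hch : ∀ j : Fin k, ∃ b : Fin s,
        b ∈ Finset.univ ∧ N j xs = dist x (xs (idx j b)) := by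
      intro j
      obtain ⟨b, hb1, hb2⟩ := Finset.exists_mem_eq_inf' hne fun b => dist x (xs (idx j b))
      exact ⟨b, hb1, hb2⟩
    choose bsel hbmem hbval using hch
    set T : Fin k → Fin n := fun j => e j (bsel j) with hTdef
    have hTinj : Function.Injective T := fun j j' h => he _ _ _ _ h
    have hGinj : Function.Injective (Gsel xs) := by
      intro i i' h
      by_contra hne'
      rcases lt_or_gt_of_ne hne' with hlt | hlt
      · rcases hG1 xs i i' hlt with h1 | h1
        · rw [h] at h1; exact lt_irrefl _ h1
        · rw [h] at h1; exact lt_irrefl _ h1.2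
      · rcases hG1 xs i' i hlt with h1 | h1
        · rw [h] at h1; exact lt_irrefl _ h1
        · rw [h] at h1; exact lt_irrefl _ h1.2
    set v : Fin n → ℝ := fun jn => dhat xs (Fin.castAdd m jn) (star xs) with hvdef
    have hsum_sel : ∑ i : Fin k, v (Gsel xs i) ≤ ∑ j : Fin k, v (T j) := by
      apply aux_sel_sum_le v (Gsel xs) T hGinj hTinj
      intro jn hjn i
      rcases hG2 xs jn hjn i with h1 | h1
      · exact le_of_lt h1
      · exact le_of_eq h1.1
    set A : ℝ := ∑ i : Fin k, dist (xs (Fin.castAdd m (Gsel xs i))) (xs (star xs)) with hAdef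
    have hA0 : 0 ≤ A := Finset.sum_nonneg fun i _ => dist_nonneg
    have hAle : A ≤ (1 - δ)⁻¹ * ∑ i : Fin k, v (Gsel xs i) := by
      rw [hAdef, Finset.mul_sum]
      apply Finset.sum_le_sum
      intro i _
      have h1 := (hx (Fin.castAdd m (Gsel xs i)) (star xs)).1
      exact (le_inv_mul_iff₀ hδ1').mpr h1
    have hvT : ∀ j : Fin k, v (T j) ≤ (1 + δ) * (2 * N j xs) := by
      intro j
      have h1 := (hx (Fin.castAdd m (T j)) (star xs)).2
      have hNj : dist x (xs (Fin.castAdd m (T j))) = N j xs := (hbval j).symm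
      have htri : dist (xs (Fin.castAdd m (T j))) (xs (star xs))
          ≤ dist x (xs (Fin.castAdd m (T j))) + dist x (xs (star xs)) := by
        rw [dist_comm x (xs (Fin.castAdd m (T j)))]
        exact dist_triangle _ x _
      have hstar := hstar1 xs (Fin.castAdd m (T j))
      have h2 : dist (xs (Fin.castAdd m (T j))) (xs (star xs)) ≤ 2 * N j xs := by
        rw [← hNj]; linarith
      calc v (T j) ≤ (1 + δ) * dist (xs (Fin.castAdd m (T j))) (xs (star xs)) := h1
        _ ≤ (1 + δ) * (2 * N j xs) := mul_le_mul_of_nonneg_left h2 hδ1''.le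
    set B : ℝ := ∑ j : Fin k, 2 * N j xs with hBdef
    have hB0 : 0 ≤ B := Finset.sum_nonneg fun j _ => by
      have := hN0 j xs; linarith
    have hAB : A ≤ (1 + δ) / (1 - δ) * B := by
      have h1 : ∑ j : Fin k, v (T j) ≤ (1 + δ) * B := by
        rw [hBdef, Finset.mul_sum]
        exact Finset.sum_le_sum fun j _ => hvT j
      calc A ≤ (1 - δ)⁻¹ * ∑ i : Fin k, v (Gsel xs i) := hAle
        _ ≤ (1 - δ)⁻¹ * ∑ j : Fin k, v (T j) :=
            mul_le_mul_of_nonneg_left hsum_sel (inv_nonneg.mpr hδ1'.le)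
        _ ≤ (1 - δ)⁻¹ * ((1 + δ) * B) :=
            mul_le_mul_of_nonneg_left h1 (inv_nonneg.mpr hδ1'.le)
        _ = (1 + δ) / (1 - δ) * B := by ring
    have hD : |∑ i : Fin k, (f (xs (Fin.castAdd m (Gsel xs i))) - f (xs (star xs)))|
        ≤ L' * A := by
      refine (Finset.abs_sum_le_sum_abs _ _).trans ?_
      rw [hAdef, Finset.mul_sum]
      exact Finset.sum_le_sum fun i _ => hLip' _ _
    have hLHS : (1 / (k : ℝ)) * ∑ i : Fin k, f (xs (Fin.castAdd m (Gsel xs i)))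
        - f (xs (star xs))
        = (1 / (k : ℝ)) * ∑ i : Fin k,
            (f (xs (Fin.castAdd m (Gsel xs i))) - f (xs (star xs))) := by
      rw [Finset.sum_sub_distrib, Finset.sum_const, Finset.card_univ, Fintype.card_fin,
        nsmul_eq_mul]
      have hkne : (k:ℝ) ≠ 0 := ne_of_gt hkr
      field_simp
    rw [hLHS]
    have h1 : |∑ i : Fin k, (f (xs (Fin.castAdd m (Gsel xs i))) - f (xs (star xs)))|
        ≤ L' * ((1 + δ) / (1 - δ) * B) :=
      hD.trans (mul_le_mul_of_nonneg_left hAB hL'0)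
    have habs : (∑ i : Fin k, (f (xs (Fin.castAdd m (Gsel xs i))) - f (xs (star xs)))) ^ 2
        ≤ (L' * ((1 + δ) / (1 - δ) * B)) ^ 2 := by
      rw [← sq_abs (∑ i : Fin k, _)]
      exact pow_le_pow_left₀ (abs_nonneg _) h1 2
    have hstep2 : (∑ i : Fin k, (f (xs (Fin.castAdd m (Gsel xs i))) - f (xs (star xs)))) ^ 2
        ≤ L' ^ 2 * ((1 + δ) / (1 - δ)) ^ 2 * B ^ 2 := by
      refine habs.trans (le_of_eq ?_)
      ring
    have hstep3 : B ^ 2 ≤ (k:ℝ) * (4 * ∑ j : Fin k, N j xs ^ 2) := by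
      have hcs := Finset.sum_mul_sq_le_sq_mul_sq Finset.univ
        (fun _ : Fin k => (1:ℝ)) (fun j => 2 * N j xs)
      simp only [one_mul, one_pow] at hcs
      rw [Finset.sum_const, Finset.card_univ, Fintype.card_fin, nsmul_eq_mul, mul_one] at hcs
      have h4 : ∑ j : Fin k, (2 * N j xs) ^ 2 = 4 * ∑ j : Fin k, N j xs ^ 2 := by
        rw [Finset.mul_sum]
        exact Finset.sum_congr rfl fun j _ => by ring
      rw [hBdef]
      calc (∑ j : Fin k, 2 * N j xs) ^ 2 ≤ (k:ℝ) * ∑ j : Fin k, (2 * N j xs) ^ 2 := hcs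
        _ = (k:ℝ) * (4 * ∑ j : Fin k, N j xs ^ 2) := by rw [h4]
    have hS20 : 0 ≤ ∑ j : Fin k, N j xs ^ 2 :=
      Finset.sum_nonneg fun j _ => sq_nonneg _
    calc ((1 / (k : ℝ)) * ∑ i : Fin k,
          (f (xs (Fin.castAdd m (Gsel xs i))) - f (xs (star xs)))) ^ 2
        = (1 / (k : ℝ)) ^ 2
            * (∑ i : Fin k, (f (xs (Fin.castAdd m (Gsel xs i))) - f (xs (star xs)))) ^ 2 := by
          ring
      _ ≤ (1 / (k : ℝ)) ^ 2 * (L' ^ 2 * ((1 + δ) / (1 - δ)) ^ 2 * B ^ 2) :=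
          mul_le_mul_of_nonneg_left hstep2 (by positivity)
      _ ≤ (1 / (k : ℝ)) ^ 2
            * (L' ^ 2 * ((1 + δ) / (1 - δ)) ^ 2 * ((k:ℝ) * (4 * ∑ j : Fin k, N j xs ^ 2))) := by
          refine mul_le_mul_of_nonneg_left ?_ (by positivity : (0:ℝ) ≤ (1 / (k : ℝ)) ^ 2)
          exact mul_le_mul_of_nonneg_left hstep3 (by positivity)
      _ = C0 * ∑ j : Fin k, N j xs ^ 2 := by
          rw [hC0def]
          have hkne : (k:ℝ) ≠ 0 := ne_of_gt hkr
          field_simp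
  -- per-block integral bound
  have hq1 : ∀ r : ℝ, 0 < r → r ≤ R → Q * r ^ d ≤ 1 := by
    intro r hr0 hrR
    have h1 := hball x r hr0 hrR
    have h2 : μ (Metric.ball x r) ≤ 1 := prob_le_one
    exact ENNReal.ofReal_le_one.mp (h1.trans h2)
  have hblock : ∀ j : Fin k, ∫ xs, N j xs ^ 2 ∂P ≤ c * (s:ℝ) ^ (-(2:ℝ)/d) := by
    intro j
    refine aux_nn_sq_integral P d hd Q R Dm hQ hR hDm s hs1 (N j) (hNmeas j)
      (hN0 j) (hNDm j) ?_ hq1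
    intro r hr0 hrR
    have hinj : Function.Injective (fun b : Fin s => idx j b) := by
      intro b b' h
      have h1 : j.1 * s + b.1 = j.1 * s + b'.1 := by
        have := congrArg Fin.val h
        simpa [hidxdef, hedef] using this
      exact Fin.ext (by omega)
    have hsubset : {xs : Fin (n + m) → M | r < N j xs}
        ⊆ {xs | ∀ b : Fin s, xs (idx j b) ∈ (Metric.ball x r)ᶜ} := by
      intro xs hxs b
      simp only [Set.mem_setOf_eq] at hxs
      have h1 : r < dist x (xs (idx j b)) := lt_of_lt_of_le hxs (hNle j xs b)
      simp only [Set.mem_compl_iff, Metric.mem_ball, not_lt]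
      rw [dist_comm]
      exact h1.le
    have hcyl := aux_cylinder μ (fun b : Fin s => idx j b) hinj (Metric.ball x r)ᶜ
    rw [Fintype.card_fin] at hcyl
    have h1 : P {xs | r < N j xs} ≤ μ (Metric.ball x r)ᶜ ^ s :=
      (measure_mono hsubset).trans hcyl
    have h2 := aux_compl_pow_toReal μ (Metric.ball x r) measurableSet_ball (Q * r ^ d)
      (by positivity) (hball x r hr0 hrR) s
    calc (P {xs | r < N j xs}).toReal
        ≤ ((μ (Metric.ball x r)ᶜ) ^ s).toReal :=
          ENNReal.toReal_mono (ENNReal.pow_ne_top (measure_ne_top μ _)) h1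
      _ ≤ (1 - Q * r ^ d) ^ s := h2
  -- put everything together
  have hmono : ∫ xs, ((1 / (k : ℝ)) * ∑ i : Fin k, f (xs (Fin.castAdd m (Gsel xs i)))
        - f (xs (star xs))) ^ 2 ∂P
      ≤ ∫ xs, C0 * ∑ j : Fin k, N j xs ^ 2 ∂P := by
    apply integral_mono_of_nonneg
    · filter_upwards with xs using sq_nonneg _
    · exact hGint
    · filter_upwards [hdae] with xs hx using hpt xs hx
  refine hmono.trans ?_
  rw [integral_const_mul, integral_finset_sum Finset.univ fun j _ => hNint j]
  have hsum : ∑ j : Fin k, ∫ xs, N j xs ^ 2 ∂P ≤ (k:ℝ) * (c * (s:ℝ) ^ (-(2:ℝ)/d)) := by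
    refine (Finset.sum_le_sum fun j _ => hblock j).trans (le_of_eq ?_)
    rw [Finset.sum_const, Finset.card_univ, Fintype.card_fin, nsmul_eq_mul]
  have hpow0 : (0:ℝ) ≤ (s:ℝ) ^ (-(2:ℝ)/d) := Real.rpow_nonneg (Nat.cast_nonneg s) _
  have hX0 : (0:ℝ) ≤ ((1 + δ) / (1 - δ)) ^ 2 * ((4 * c) * ((s:ℝ) ^ (-(2:ℝ)/d))) := by
    positivity
  calc C0 * ∑ j : Fin k, ∫ xs, N j xs ^ 2 ∂P
      ≤ C0 * ((k:ℝ) * (c * (s:ℝ) ^ (-(2:ℝ)/d))) :=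
        mul_le_mul_of_nonneg_left hsum (by rw [hC0def]; positivity)
    _ = L' ^ 2 * (((1 + δ) / (1 - δ)) ^ 2 * ((4 * c) * ((s:ℝ) ^ (-(2:ℝ)/d)))) := by
        rw [hC0def]
        have hkne : (k:ℝ) ≠ 0 := ne_of_gt hkr
        field_simp
    _ ≤ L ^ 2 * (((1 + δ) / (1 - δ)) ^ 2 * ((4 * c) * ((s:ℝ) ^ (-(2:ℝ)/d)))) :=
        mul_le_mul_of_nonneg_right hL2 hX0
    _ = L ^ 2 * ((1 + δ) / (1 - δ)) ^ 2 * (4 * c) * ((s:ℝ) ^ (-(2:ℝ)/d)) := by ring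
end
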